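/- arXiv:2411.19255 — 5 statements merged into one kernel-verified Lean document; each statement's English description precedes it below -/
import Mathlib

section
/- Let λ, μ, α > 0 and let φ satisfy φ(T)/T → ∞ as T → ∞. Then the family of random variables ξ_T(1) satisfies the large deviation principle with normalizing function ψ(T) = φ(T)·ln(φ(T)/T) and rate function I_2, where I_2(x) = ∞ for x < 0 and I_2(x) = x for x ≥ 0 (superlarge deviation principle). -/
open MeasureTheory ProbabilityTheory Filter Set
open scoped ENNReal Topology

noncomputable section

/-- Transition probabilities of the embedded Markov chain of the Poisson process with
uniform catastrophes: from `i ≥ 1`, go to `i+1` with probability `λ/(λ+μ)` and to each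
`j < i` with probability `μ/(i(λ+μ))`; from `0`, go to `1` with probability `1`. -/
def transP (lam mu : ℝ) (i j : ℕ) : ℝ :=
  if i = 0 then (if j = 1 then 1 else 0)
  else if j = i + 1 then lam / (lam + mu)
  else if j < i then mu / (i * (lam + mu))
  else 0

/-- `η` is (distributed as) the discrete-time Markov chain on `ℕ` started at `x` with
transition probabilities `transP lam mu`, under the probability measure `P`:
the finite-dimensional distributions are products of transition probabilities. -/
def IsMarkovChainFrom {Ω : Type*} [MeasurableSpace Ω] (P : Measure Ω)
    (lam mu : ℝ) (x : ℕ) (η : ℕ → Ω → ℕ) : Prop :=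
  (∀ k, Measurable (η k)) ∧
  ∀ (n : ℕ) (path : ℕ → ℕ),
    P {ω | ∀ l ≤ n, η l ω = path l} =
      (if path 0 = x then 1 else 0) *
        ∏ l ∈ Finset.range n, ENNReal.ofReal (transP lam mu (path l) (path (l + 1)))

/-- `ν` is a Poisson process of rate `α` under `P`: it starts at `0`, has monotone paths
on `[0,∞)`, independent increments, and each increment over `[s,t]` is Poisson
distributed with mean `α(t-s)`. -/
def IsPoissonProcess {Ω : Type*} [MeasurableSpace Ω] (P : Measure Ω)
    (α : ℝ) (ν : ℝ → Ω → ℕ) : Prop :=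
  (∀ t, Measurable (ν t)) ∧
  (∀ ω, ν 0 ω = 0) ∧
  (∀ ω, MonotoneOn (fun t => ν t ω) (Set.Ici (0 : ℝ))) ∧
  (∀ (n : ℕ) (t : ℕ → ℝ), 0 ≤ t 0 → Monotone t →
    iIndepFun
      (fun i : Fin n => fun ω => ν (t (i + 1)) ω - ν (t i) ω) P) ∧
  (∀ s t : ℝ, 0 ≤ s → s ≤ t → ∀ k : ℕ,
    P {ω | ν t ω - ν s ω = k} =
      ENNReal.ofReal (Real.exp (-(α * (t - s))) * (α * (t - s)) ^ k / (Nat.factorial k)))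

/-- The processes `η` and `ν` are independent (as processes). -/
def IndepProc {Ω : Type*} [MeasurableSpace Ω] (P : Measure Ω)
    (η : ℕ → Ω → ℕ) (ν : ℝ → Ω → ℕ) : Prop :=
  IndepFun (fun ω => fun k => η k ω) (fun ω => fun t => ν t ω) P

/-- The family of real random variables `X T` satisfies the large deviation principle
under `P`, with normalizing function `ψ` and rate function `I`: rate-function level sets
are compact, and for every Borel set `B` the standard upper and lower large-deviation
bounds hold (logarithms of probabilities are taken in `EReal`, with `log 0 = ⊥`). -/
def SatisfiesLDP {Ω : Type*} [MeasurableSpace Ω] (P : Measure Ω)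
    (X : ℝ → Ω → ℝ) (ψ : ℝ → ℝ) (I : ℝ → EReal) : Prop :=
  (∀ c : ℝ, 0 ≤ c → IsCompact {x : ℝ | I x ≤ (c : EReal)}) ∧
  (∀ B : Set ℝ, MeasurableSet B →
    Filter.limsup (fun T => (((ψ T)⁻¹ : ℝ) : EReal) * ENNReal.log (P {ω | X T ω ∈ B}))
        Filter.atTop
      ≤ -(⨅ x ∈ closure B, I x)) ∧
  (∀ B : Set ℝ, MeasurableSet B →
    -(⨅ x ∈ interior B, I x) ≤
      Filter.liminf (fun T => (((ψ T)⁻¹ : ℝ) : EReal) * ENNReal.log (P {ω | X T ω ∈ B}))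
        Filter.atTop)

/-!
The chain started at `0` climbs at most one level per step, so almost surely `ξ(T) ≤ ν(T)` and
`P(ξ(T) ≥ m) ≤ P(ν(T) ≥ m) ≤ (αT)^m / m!`. Conversely `ξ(T) = m` as soon as `ν(T) = m` and the
chain climbs straight up, which by independence has probability
`(λ/(λ+μ))^m e^{-αT} (αT)^m / m!`. For `m = ⌈x φ(T)⌉` the logarithms of both bounds are
`m log (αT/m) + O(m + T) = -x φ(T) log (φ(T)/T) (1 + o(1))`, since `φ(T)/T → ∞`.
-/

lemma transP_eq_zero_of_add_one_lt (lam mu : ℝ) {i j : ℕ} (h : i + 1 < j) :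
    transP lam mu i j = 0 := by
  unfold transP
  split_ifs <;> first | rfl | (exfalso; omega)

lemma apply_le_self_of_map_succ_le_add_one {p : ℕ → ℕ} (h0 : p 0 = 0) {k : ℕ}
    (h : ∀ l < k, p (l + 1) ≤ p l + 1) : p k ≤ k := by
  induction k with
  | zero => omega
  | succ n ih =>
    have := ih fun l hl => h l (by omega)
    have := h n (by omega)
    omega

namespace IsMarkovChainFrom

variable {Ω : Type*} [MeasurableSpace Ω] {P : Measure Ω} {lam mu : ℝ} {η : ℕ → Ω → ℕ}

lemma measure_lt_eq_zero (hη : IsMarkovChainFrom P lam mu 0 η) (k : ℕ) :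
    P {ω | k < η k ω} = 0 := by
  let extend (v : Fin (k + 1) → ℕ) (l : ℕ) : ℕ := if h : l < k + 1 then v ⟨l, h⟩ else 0
  have hcover : {ω | k < η k ω} ⊆
      ⋃ v : {v : Fin (k + 1) → ℕ // k < v (Fin.last k)}, {ω | ∀ l ≤ k, η l ω = extend v l} :=
    fun ω hω => mem_iUnion.2 ⟨⟨fun i => η i ω, hω⟩, fun l hl => by
      simp only [extend, dif_pos (Nat.lt_succ_of_le hl)]⟩
  refine measure_mono_null hcover (measure_iUnion_null fun v => ?_)
  rw [hη.2 k (extend v)]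
  by_cases h0 : extend v 0 = 0
  · have hk : k < extend v k := by simpa [extend, Fin.last] using v.2
    -- a path from `0` that ends above `k` after `k` steps makes a jump of size at least two
    obtain ⟨l, hlk, hl⟩ : ∃ l < k, extend v l + 1 < extend v (l + 1) := by
      by_contra! h
      exact absurd (apply_le_self_of_map_succ_le_add_one h0 h) (by omega)
    rw [Finset.prod_eq_zero (Finset.mem_range.2 hlk)
      (by rw [transP_eq_zero_of_add_one_lt lam mu hl, ENNReal.ofReal_zero]), mul_zero]
  · rw [if_neg h0, zero_mul]

lemma ae_le (hη : IsMarkovChainFrom P lam mu 0 η) : ∀ᵐ ω ∂P, ∀ k, η k ω ≤ k := by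
  rw [ae_all_iff]
  exact fun k => measure_mono_null (fun ω hω => by simpa using hω) (hη.measure_lt_eq_zero k)

lemma ofReal_pow_le_measure_climb (hη : IsMarkovChainFrom P lam mu 0 η) (hlam : 0 ≤ lam)
    (hmu : 0 ≤ mu) (m : ℕ) :
    ENNReal.ofReal ((lam / (lam + mu)) ^ m) ≤ P {ω | ∀ l ≤ m, η l ω = l} := by
  have hc0 : 0 ≤ lam / (lam + mu) := by positivity
  have hc1 : lam / (lam + mu) ≤ 1 := div_le_one_of_le₀ (by linarith) (by positivity)
  rw [show {ω | ∀ l ≤ m, η l ω = l} = {ω | ∀ l ≤ m, η l ω = id l} from rfl, hη.2 m id]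
  simp only [id_eq, ↓reduceIte, one_mul]
  calc ENNReal.ofReal ((lam / (lam + mu)) ^ m)
      = ENNReal.ofReal (lam / (lam + mu)) ^ (Finset.range m).card := by
        rw [ENNReal.ofReal_pow hc0, Finset.card_range]
    _ ≤ _ := Finset.pow_card_le_prod _ _ _ fun l _ => ENNReal.ofReal_le_ofReal ?_
  rcases Nat.eq_zero_or_pos l with rfl | hl
  · simpa [transP] using hc1
  · simp [transP, hl.ne']

end IsMarkovChainFrom

namespace IsPoissonProcess

variable {Ω : Type*} [MeasurableSpace Ω] {P : Measure Ω} {α : ℝ} {ν : ℝ → Ω → ℕ}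

lemma measure_eq (hν : IsPoissonProcess P α ν) {T : ℝ} (hT : 0 ≤ T) (m : ℕ) :
    P {ω | ν T ω = m} = ENNReal.ofReal (Real.exp (-(α * T)) * (α * T) ^ m / m.factorial) := by
  simpa [hν.2.1] using hν.2.2.2.2 0 T le_rfl hT m

lemma measure_tail_le (hν : IsPoissonProcess P α ν) (hα : 0 ≤ α) {T : ℝ} (hT : 0 ≤ T)
    (m : ℕ) : P {ω | m ≤ ν T ω} ≤ ENNReal.ofReal ((α * T) ^ m / m.factorial) := by
  set z := α * T
  have hz : 0 ≤ z := by positivity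
  -- `m! k! ≤ (m + k)!` bounds the tail termwise by `z ^ m / m!` times the Poisson weights
  have hterm (k : ℕ) : Real.exp (-z) * z ^ (m + k) / (m + k).factorial ≤
      z ^ m / m.factorial * (Real.exp (-z) * z ^ k / k.factorial) := by
    have hfac : (m.factorial : ℝ) * k.factorial ≤ (m + k).factorial := by
      exact_mod_cast Nat.le_of_dvd (Nat.factorial_pos _)
        (Nat.factorial_mul_factorial_dvd_factorial_add m k)
    calc Real.exp (-z) * z ^ (m + k) / (m + k).factorial
        ≤ Real.exp (-z) * z ^ (m + k) / (m.factorial * k.factorial) := by gcongr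
      _ = _ := by rw [pow_add]; ring
  have hweights : ∑' k : ℕ, ENNReal.ofReal (Real.exp (-z) * z ^ k / k.factorial) = 1 := by
    have h := hasSum_one_poissonMeasure z.toNNReal
    rw [Real.coe_toNNReal z hz] at h
    rw [← ENNReal.ofReal_tsum_of_nonneg (fun k => by positivity) h.summable, h.tsum_eq,
      ENNReal.ofReal_one]
  calc P {ω | m ≤ ν T ω} ≤ ∑' k : ℕ, P {ω | ν T ω = m + k} := by
        refine (measure_mono fun ω (hω : m ≤ ν T ω) => mem_iUnion.2 ⟨ν T ω - m, ?_⟩).trans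
          (measure_iUnion_le _)
        simp only [mem_ofPred_eq]; omega
    _ ≤ ∑' k : ℕ, ENNReal.ofReal (z ^ m / m.factorial) *
          ENNReal.ofReal (Real.exp (-z) * z ^ k / k.factorial) := by
        refine ENNReal.tsum_le_tsum fun k => ?_
        rw [hν.measure_eq hT, ← ENNReal.ofReal_mul (by positivity)]
        exact ENNReal.ofReal_le_ofReal (hterm k)
    _ = ENNReal.ofReal (z ^ m / m.factorial) := by rw [ENNReal.tsum_mul_left, hweights, mul_one]

end IsPoissonProcess

section CatastropheProcess

variable {Ω : Type*} [MeasurableSpace Ω] {P : Measure Ω} {lam mu α : ℝ}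
  {η : ℕ → Ω → ℕ} {ν : ℝ → Ω → ℕ}

lemma measure_catastrophe_tail_le (hη : IsMarkovChainFrom P lam mu 0 η)
    (hν : IsPoissonProcess P α ν) (hα : 0 ≤ α) {T : ℝ} (hT : 0 ≤ T) (m : ℕ) :
    P {ω | m ≤ η (ν T ω) ω} ≤ ENNReal.ofReal ((α * T) ^ m / m.factorial) :=
  (measure_mono_ae (hη.ae_le.mono fun _ hω hm => hm.trans (hω _))).trans
    (hν.measure_tail_le hα hT m)

lemma ofReal_le_measure_catastrophe_eq (hη : IsMarkovChainFrom P lam mu 0 η)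
    (hν : IsPoissonProcess P α ν) (hind : IndepProc P η ν) (hlam : 0 ≤ lam) (hmu : 0 ≤ mu)
    {T : ℝ} (hT : 0 ≤ T) (m : ℕ) :
    ENNReal.ofReal ((lam / (lam + mu)) ^ m * (Real.exp (-(α * T)) * (α * T) ^ m / m.factorial))
      ≤ P {ω | η (ν T ω) ω = m} := by
  have hclimb : MeasurableSet {f : ℕ → ℕ | ∀ l ≤ m, f l = l} := by measurability
  have hjumps : MeasurableSet {g : ℝ → ℕ | g T = m} := by measurability
  calc _ = ENNReal.ofReal ((lam / (lam + mu)) ^ m) *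
        ENNReal.ofReal (Real.exp (-(α * T)) * (α * T) ^ m / m.factorial) :=
        ENNReal.ofReal_mul (by positivity)
    _ ≤ P {ω | ∀ l ≤ m, η l ω = l} * P {ω | ν T ω = m} :=
        mul_le_mul' (hη.ofReal_pow_le_measure_climb hlam hmu m) (hν.measure_eq hT m).ge
    _ = P ({ω | ∀ l ≤ m, η l ω = l} ∩ {ω | ν T ω = m}) :=
        (hind.measure_inter_preimage_eq_mul _ _ hclimb hjumps).symm
    _ ≤ P {ω | η (ν T ω) ω = m} :=
        measure_mono fun ω ⟨hclimbω, hjumpsω⟩ => by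
          simp only [mem_ofPred_eq] at hclimbω hjumpsω ⊢
          rw [hjumpsω, hclimbω m le_rfl]

end CatastropheProcess

lemma mul_log_sub_le_log_factorial (m : ℕ) : m * Real.log m - m ≤ Real.log m.factorial := by
  have h := Real.pow_div_factorial_le_exp (m : ℝ) (Nat.cast_nonneg m) m
  rcases Nat.eq_zero_or_pos m with rfl | hm
  · simp
  have hm' : (0 : ℝ) < m := Nat.cast_pos.2 hm
  rw [← Real.log_le_iff_le_exp (by positivity), Real.log_div (by positivity) (by positivity),
    Real.log_pow] at h
  linarith

lemma log_pow_div_factorial_le {z : ℝ} (hz : 0 < z) (m : ℕ) :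
    Real.log (z ^ m / m.factorial) ≤ m * (Real.log z - Real.log m + 1) := by
  rw [Real.log_div (by positivity) (by positivity), Real.log_pow]
  linarith [mul_log_sub_le_log_factorial m]

lemma le_log_pow_mul_poisson {c z : ℝ} (hc : 0 < c) (hz : 0 < z) (m : ℕ) :
    m * (Real.log z - Real.log m + Real.log c) - z ≤
      Real.log (c ^ m * (Real.exp (-z) * z ^ m / m.factorial)) := by
  have hfac : Real.log m.factorial ≤ m * Real.log m := by
    rw [← Real.log_pow]
    exact Real.log_le_log (by positivity) (by exact_mod_cast m.factorial_le_pow)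
  rw [Real.log_mul (by positivity) (by positivity), Real.log_div (by positivity) (by positivity),
    Real.log_mul (by positivity) (by positivity), Real.log_exp, Real.log_pow, Real.log_pow]
  linarith

section Superlinear

variable {φ : ℝ → ℝ}

lemma tendsto_atTop_of_div_self (hφ : Tendsto (fun T => φ T / T) atTop atTop) :
    Tendsto φ atTop atTop :=
  (hφ.atTop_mul_atTop₀ tendsto_id).congr' <| by
    filter_upwards [eventually_gt_atTop 0] with T hT using div_mul_cancel₀ _ hT.ne'

lemma tendsto_mul_log_div_self (hφ : Tendsto (fun T => φ T / T) atTop atTop) :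
    Tendsto (fun T => φ T * Real.log (φ T / T)) atTop atTop :=
  (tendsto_atTop_of_div_self hφ).atTop_mul_atTop₀ (Real.tendsto_log_atTop.comp hφ)

lemma tendsto_self_div_zero (hφ : Tendsto (fun T => φ T / T) atTop atTop) :
    Tendsto (fun T => T / φ T) atTop (𝓝 0) :=
  hφ.inv_tendsto_atTop.congr fun _ => inv_div _ _

lemma tendsto_ceil_mul_div (hφ : Tendsto (fun T => φ T / T) atTop atTop) {x : ℝ} (hx : 0 ≤ x) :
    Tendsto (fun T => (⌈x * φ T⌉₊ : ℝ) / φ T) atTop (𝓝 x) := by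
  have hφ' := tendsto_atTop_of_div_self hφ
  have hup : Tendsto (fun T => x + (φ T)⁻¹) atTop (𝓝 x) := by
    simpa using tendsto_const_nhds.add hφ'.inv_tendsto_atTop
  refine tendsto_of_tendsto_of_tendsto_of_le_of_le' tendsto_const_nhds hup ?_ ?_ <;>
    filter_upwards [hφ'.eventually_gt_atTop 0] with T hT
  · rw [le_div_iff₀ hT]
    exact Nat.le_ceil _
  · rw [div_le_iff₀ hT, add_mul, inv_mul_cancel₀ hT.ne']
    exact (Nat.ceil_lt_add_one (by positivity)).le

lemma inv_mul_log_div_mul_sub_eq {φ T α m : ℝ} (hφ : 0 < φ) (hT : 0 < T) (hα : 0 < α)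
    (hL : Real.log (φ / T) ≠ 0) (A B : ℝ) :
    (φ * Real.log (φ / T))⁻¹ * (m * (Real.log (α * T) - Real.log m + A) - B * T) =
      (m / φ * (Real.log α + A) - m / φ * Real.log (m / φ) - B * (T / φ)) / Real.log (φ / T)
        - m / φ := by
  have hlogφ : Real.log φ = Real.log (φ / T) + Real.log T := by
    rw [Real.log_div hφ.ne' hT.ne']; ring
  rw [Real.log_mul hα.ne' hT.ne']
  rcases eq_or_ne m 0 with rfl | hm
  · field_simp
    ring
  · rw [Real.log_div hm hφ.ne', hlogφ]
    field_simp
    ring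

/-- With `m = ⌈x φ(T)⌉`, the exponent `m (log (α T) - log m + A) - B T` of both probability
bounds is `-x φ(T) log (φ(T)/T) (1 + o(1))`. -/
lemma tendsto_ceil_mul_log_sub (hφ : Tendsto (fun T => φ T / T) atTop atTop) {x : ℝ}
    (hx : 0 ≤ x) {α : ℝ} (hα : 0 < α) (A B : ℝ) :
    Tendsto (fun T => (φ T * Real.log (φ T / T))⁻¹ *
      ((⌈x * φ T⌉₊ : ℝ) * (Real.log (α * T) - Real.log ⌈x * φ T⌉₊ + A) - B * T))
      atTop (𝓝 (-x)) := by
  have hy := tendsto_ceil_mul_div hφ hx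
  have hL : Tendsto (fun T => Real.log (φ T / T)) atTop atTop := Real.tendsto_log_atTop.comp hφ
  have hnum := ((hy.mul_const (Real.log α + A)).sub
    (Real.continuous_mul_log.continuousAt.tendsto.comp hy)).sub
      ((tendsto_self_div_zero hφ).const_mul B)
  have hlim := (hnum.div_atTop hL).sub hy
  rw [zero_sub] at hlim
  refine hlim.congr' ?_
  filter_upwards [eventually_gt_atTop 0, (tendsto_atTop_of_div_self hφ).eventually_gt_atTop 0,
    hL.eventually_gt_atTop 0] with T hT hφT hLT
  exact (inv_mul_log_div_mul_sub_eq hφT hT hα hLT.ne' A B).symm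

end Superlinear

lemma limsup_le_of_eventually_le_of_tendsto {ι : Type*} {l : Filter ι} [l.NeBot]
    {f : ι → EReal} {u : ι → ℝ} {a : ℝ} (h : ∀ᶠ i in l, f i ≤ u i) (hu : Tendsto u l (𝓝 a)) :
    limsup f l ≤ a :=
  (limsup_le_limsup h).trans_eq (EReal.tendsto_coe.2 hu).limsup_eq

lemma le_liminf_of_eventually_le_of_tendsto {ι : Type*} {l : Filter ι} [l.NeBot]
    {f : ι → EReal} {u : ι → ℝ} {a : ℝ} (h : ∀ᶠ i in l, (u i : EReal) ≤ f i)
    (hu : Tendsto u l (𝓝 a)) : (a : EReal) ≤ liminf f l :=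
  (EReal.tendsto_coe.2 hu).liminf_eq.symm.trans_le (liminf_le_liminf h)

def scaledLog (ψ : ℝ) (p : ℝ≥0∞) : EReal := ((ψ⁻¹ : ℝ) : EReal) * ENNReal.log p

section ScaledLog

variable {ψ r : ℝ} {p : ℝ≥0∞}

lemma scaledLog_mono (hψ : 0 ≤ ψ) : Monotone (scaledLog ψ) := fun _ _ h =>
  mul_le_mul_of_nonneg_left (ENNReal.log_monotone h) (EReal.coe_nonneg.2 (inv_nonneg.2 hψ))

lemma scaledLog_ofReal (hr : 0 < r) :
    scaledLog ψ (ENNReal.ofReal r) = ((ψ⁻¹ * Real.log r : ℝ) : EReal) := by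
  rw [scaledLog, ENNReal.log_ofReal_of_pos hr, EReal.coe_mul]

lemma scaledLog_le_of_le_ofReal (hψ : 0 ≤ ψ) (hr : 0 < r) (h : p ≤ ENNReal.ofReal r) :
    scaledLog ψ p ≤ ((ψ⁻¹ * Real.log r : ℝ) : EReal) :=
  (scaledLog_mono hψ h).trans_eq (scaledLog_ofReal hr)

lemma le_scaledLog_of_ofReal_le (hψ : 0 ≤ ψ) (hr : 0 < r) (h : ENNReal.ofReal r ≤ p) :
    ((ψ⁻¹ * Real.log r : ℝ) : EReal) ≤ scaledLog ψ p :=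
  (scaledLog_ofReal hr).symm.trans_le (scaledLog_mono hψ h)

end ScaledLog

/-- The rate function `I₂`. -/
def sldpRate (x : ℝ) : EReal := if x < 0 then ⊤ else (x : EReal)

lemma sldpRate_of_nonneg {x : ℝ} (hx : 0 ≤ x) : sldpRate x = x := if_neg (not_lt.2 hx)

lemma sldpRate_nonneg (x : ℝ) : 0 ≤ sldpRate x := by
  unfold sldpRate
  split_ifs with hx
  · exact le_top
  · exact EReal.coe_nonneg.2 (not_lt.1 hx)

lemma setOf_sldpRate_le (c : ℝ) : {x | sldpRate x ≤ c} = Icc 0 c := by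
  ext x
  simp only [sldpRate, mem_ofPred_eq, mem_Icc]
  split_ifs with hx
  · simp [hx.not_ge]
  · simp [not_lt.1 hx]

/-- As `I₂` is infinite on `(-∞, 0)` and increasing on `[0, ∞)`, closed sets can be replaced by
upper tails and open sets by balls. -/
theorem satisfiesLDP_sldpRate_of_bounds {Ω : Type*} [MeasurableSpace Ω] {P : Measure Ω}
    {X : ℝ → Ω → ℝ} {ψ : ℝ → ℝ} (hX : ∀ᶠ T in atTop, ∀ ω, 0 ≤ X T ω)
    (hψ : ∀ᶠ T in atTop, 0 < ψ T)
    (upper : ∀ b, 0 ≤ b →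
      limsup (fun T => scaledLog (ψ T) (P {ω | b ≤ X T ω})) atTop ≤ ((-b : ℝ) : EReal))
    (lower : ∀ x, 0 ≤ x → ∀ δ > 0,
      ((-x : ℝ) : EReal) ≤ liminf (fun T => scaledLog (ψ T) (P {ω | X T ω ∈ Metric.ball x δ}))
        atTop) :
    SatisfiesLDP P X ψ sldpRate := by
  refine ⟨fun c _ => setOf_sldpRate_le c ▸ isCompact_Icc, fun B _ => ?_, fun B _ => ?_⟩
  · change limsup (fun T => scaledLog (ψ T) (P {ω | X T ω ∈ B})) atTop ≤ _
    set a := ⨅ x ∈ closure B, sldpRate x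
    have ha : 0 ≤ a := le_iInf₂ fun x _ => sldpRate_nonneg x
    have hbound (b : ℝ) (hb : 0 ≤ b) (hba : (b : EReal) ≤ a) :
        limsup (fun T => scaledLog (ψ T) (P {ω | X T ω ∈ B})) atTop ≤ ((-b : ℝ) : EReal) := by
      refine (limsup_le_limsup ?_).trans (upper b hb)
      filter_upwards [hX, hψ] with T hXT hψT
      refine scaledLog_mono hψT.le (measure_mono fun ω (hω : X T ω ∈ B) => ?_)
      have : (b : EReal) ≤ X T ω :=
        hba.trans ((iInf₂_le _ (subset_closure hω)).trans_eq (sldpRate_of_nonneg (hXT ω)))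
      exact EReal.coe_le_coe_iff.1 this
    -- `-a` is the infimum of `-b` over the reals `0 ≤ b ≤ a`, also when `a = ⊤`
    refine EReal.le_of_forall_lt_iff_le.1 fun z hz => ?_
    have hza : ((max (-z) 0 : ℝ) : EReal) ≤ a := by
      rw [EReal.coe_strictMono.monotone.map_max, EReal.coe_neg, EReal.coe_zero]
      exact max_le (EReal.neg_lt_comm.1 hz).le ha
    refine (hbound _ (le_max_right _ _) hza).trans (EReal.coe_le_coe_iff.2 ?_)
    linarith [le_max_left (-z) 0]
  · change _ ≤ liminf (fun T => scaledLog (ψ T) (P {ω | X T ω ∈ B})) atTop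
    rw [EReal.neg_le]
    refine le_iInf₂ fun x hx => ?_
    rcases lt_or_ge x 0 with hx0 | hx0
    · simp [sldpRate, hx0]
    obtain ⟨δ, hδ, hball⟩ := Metric.mem_nhds_iff.1 (mem_interior_iff_mem_nhds.1 hx)
    rw [sldpRate_of_nonneg hx0, EReal.neg_le, ← EReal.coe_neg]
    refine (lower x hx0 δ hδ).trans (liminf_le_liminf ?_)
    filter_upwards [hψ] with T hψT
    exact scaledLog_mono hψT.le (measure_mono fun ω hω => hball hω)

section CatastropheBounds

variable {Ω : Type*} [MeasurableSpace Ω] {P : Measure Ω} {lam mu α : ℝ}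
  {η : ℕ → Ω → ℕ} {ν : ℝ → Ω → ℕ} {φ : ℝ → ℝ}

lemma limsup_scaledLog_catastrophe_le (hη : IsMarkovChainFrom P lam mu 0 η)
    (hν : IsPoissonProcess P α ν) (hα : 0 < α) (hφ : Tendsto (fun T => φ T / T) atTop atTop)
    {b : ℝ} (hb : 0 ≤ b) :
    limsup (fun T => scaledLog (φ T * Real.log (φ T / T))
      (P {ω | b ≤ (η (ν T ω) ω : ℝ) / φ T})) atTop ≤ ((-b : ℝ) : EReal) := by
  refine limsup_le_of_eventually_le_of_tendsto ?_ (tendsto_ceil_mul_log_sub hφ hb hα 1 0)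
  filter_upwards [eventually_gt_atTop 0, (tendsto_mul_log_div_self hφ).eventually_gt_atTop 0,
    (tendsto_atTop_of_div_self hφ).eventually_gt_atTop 0] with T hT hψ hφT
  set m := ⌈b * φ T⌉₊
  calc scaledLog (φ T * Real.log (φ T / T)) (P {ω | b ≤ (η (ν T ω) ω : ℝ) / φ T})
      ≤ scaledLog (φ T * Real.log (φ T / T)) (P {ω | m ≤ η (ν T ω) ω}) :=
        scaledLog_mono hψ.le <| measure_mono fun ω (hω : b ≤ _) =>
          Nat.ceil_le.2 ((le_div_iff₀ hφT).1 hω)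
    _ ≤ (((φ T * Real.log (φ T / T))⁻¹ * Real.log ((α * T) ^ m / m.factorial) : ℝ) : EReal) :=
        scaledLog_le_of_le_ofReal hψ.le (by positivity)
          (measure_catastrophe_tail_le hη hν hα.le hT.le m)
    _ ≤ _ := by
        rw [zero_mul, sub_zero]
        exact EReal.coe_le_coe_iff.2 <| mul_le_mul_of_nonneg_left
          (log_pow_div_factorial_le (by positivity) m) (inv_nonneg.2 hψ.le)

lemma le_liminf_scaledLog_catastrophe (hη : IsMarkovChainFrom P lam mu 0 η)
    (hν : IsPoissonProcess P α ν) (hind : IndepProc P η ν) (hlam : 0 < lam) (hmu : 0 ≤ mu)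
    (hα : 0 < α) (hφ : Tendsto (fun T => φ T / T) atTop atTop) {x : ℝ} (hx : 0 ≤ x)
    {δ : ℝ} (hδ : 0 < δ) :
    ((-x : ℝ) : EReal) ≤ liminf (fun T => scaledLog (φ T * Real.log (φ T / T))
      (P {ω | (η (ν T ω) ω : ℝ) / φ T ∈ Metric.ball x δ})) atTop := by
  have hc : 0 < lam / (lam + mu) := by positivity
  refine le_liminf_of_eventually_le_of_tendsto ?_
    (tendsto_ceil_mul_log_sub hφ hx hα (Real.log (lam / (lam + mu))) α)
  filter_upwards [eventually_gt_atTop 0, (tendsto_mul_log_div_self hφ).eventually_gt_atTop 0,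
    tendsto_ceil_mul_div hφ hx (Metric.ball_mem_nhds x hδ)] with T hT hψ hball
  set m := ⌈x * φ T⌉₊
  calc _ ≤ (((φ T * Real.log (φ T / T))⁻¹ * Real.log ((lam / (lam + mu)) ^ m *
          (Real.exp (-(α * T)) * (α * T) ^ m / m.factorial)) : ℝ) : EReal) :=
        EReal.coe_le_coe_iff.2 <| mul_le_mul_of_nonneg_left
          (le_log_pow_mul_poisson hc (by positivity) m) (inv_nonneg.2 hψ.le)
    _ ≤ scaledLog (φ T * Real.log (φ T / T)) (P {ω | η (ν T ω) ω = m}) :=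
        le_scaledLog_of_ofReal_le hψ.le (by positivity)
          (ofReal_le_measure_catastrophe_eq hη hν hind hlam.le hmu hT.le m)
    _ ≤ _ := scaledLog_mono hψ.le <| measure_mono fun ω (hω : η (ν T ω) ω = m) => by
        simp only [mem_ofPred_eq, hω]
        exact hball

end CatastropheBounds

theorem sldp_superlinear_poisson_uniform_catastrophes_general
    {Ω : Type*} [MeasurableSpace Ω] (P : Measure Ω)
    (lam mu alpha : ℝ) (hlam : 0 < lam) (hmu : 0 < mu) (halpha : 0 < alpha)
    (η : ℕ → Ω → ℕ) (ν : ℝ → Ω → ℕ)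
    (hη : IsMarkovChainFrom P lam mu 0 η)
    (hν : IsPoissonProcess P alpha ν)
    (hind : IndepProc P η ν)
    (φ : ℝ → ℝ)
    (hφ : Tendsto (fun T => φ T / T) atTop atTop) :
    SatisfiesLDP P (fun T ω => (η (ν T ω) ω : ℝ) / φ T)
      (fun T => φ T * Real.log (φ T / T))
      (fun x => if x < 0 then (⊤ : EReal) else ((x : ℝ) : EReal)) := by
  have hX : ∀ᶠ T in atTop, ∀ ω, 0 ≤ (η (ν T ω) ω : ℝ) / φ T := by
    filter_upwards [(tendsto_atTop_of_div_self hφ).eventually_gt_atTop 0] with T hφT ω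
    positivity
  exact satisfiesLDP_sldpRate_of_bounds hX ((tendsto_mul_log_div_self hφ).eventually_gt_atTop 0)
    (fun b hb => limsup_scaledLog_catastrophe_le hη hν halpha hφ hb)
    (fun x hx δ hδ => le_liminf_scaledLog_catastrophe hη hν hind hlam hmu.le halpha hφ hx hδ)

/-- **Theorem (SLDP, superlinear regime).** If `φ(T)/T → ∞`, then the family
`ξ_T(1) = ξ(T)/φ(T)` satisfies the large deviation principle with normalizing function
`ψ(T) = φ(T)·ln(φ(T)/T)` and rate function `I₂`, where `I₂(x) = ∞` for `x < 0` and
`I₂(x) = x` for `x ≥ 0`. -/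
theorem sldp_superlinear_poisson_uniform_catastrophes
    {Ω : Type*} [MeasurableSpace Ω] (P : Measure Ω) [IsProbabilityMeasure P]
    (lam mu alpha : ℝ) (hlam : 0 < lam) (hmu : 0 < mu) (halpha : 0 < alpha)
    (η : ℕ → Ω → ℕ) (ν : ℝ → Ω → ℕ)
    (hη : IsMarkovChainFrom P lam mu 0 η)
    (hν : IsPoissonProcess P alpha ν)
    (hind : IndepProc P η ν)
    (φ : ℝ → ℝ) (hφpos : ∀ T > (0 : ℝ), 0 < φ T)
    (hφ : Tendsto (fun T => φ T / T) atTop atTop) :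
    SatisfiesLDP P (fun T ω => (η (ν T ω) ω : ℝ) / φ T)
      (fun T => φ T * Real.log (φ T / T))
      (fun x => if x < 0 then (⊤ : EReal) else ((x : ℝ) : EReal)) :=
  sldp_superlinear_poisson_uniform_catastrophes_general P lam mu alpha hlam hmu halpha η ν hη hν
    hind φ hφ
end
end

section
/- Let λ, μ, α > 0 and let φ satisfy φ(T) → ∞, φ(T)/T → 0 as T → ∞, and φ(T)/T^a → ∞ for some a ∈ (0,1). Then for every x ≥ 0, limsup_{T→∞} (1/φ(T)) ln P(ξ_T(1) ≥ x) ≤ −x·ln((λ+μ)/λ). -/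
open MeasureTheory ProbabilityTheory Filter Set
open scoped ENNReal Topology

noncomputable section

/-! For every `θ ∈ (p, 1)`, where `p = λ/(λ+μ)`, the one-step kernel of `η` maps the profile
`j ↦ C θ^j` to at most `C θ^j` at all large levels `j`: the up-move contributes `p θ^(j-1)` and
the catastrophes from the levels above `j` only `O(θ^j / j)`. Hence `P(η k = j) ≤ C θ^j` uniformly
in `k`, and, by independence, `P(η (ν T) ≥ m) ≤ C' θ^m` uniformly in `T`. Taking
`m = ⌈x φ(T)⌉` bounds the `limsup` by `x log θ`; then let `θ ↓ p`. -/

section TotalProbability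

variable {Ω : Type*} [MeasurableSpace Ω] {P : Measure Ω}

lemma measure_eq_tsum_inter_preimage_singleton {β : Type*} [Countable β] [MeasurableSpace β]
    [MeasurableSingletonClass β] {f : Ω → β} (hf : Measurable f) (A : Set Ω) :
    P A = ∑' b, P (A ∩ f ⁻¹' {b}) := by
  have hfib : ∀ b, MeasurableSet (f ⁻¹' {b}) := fun b => hf (measurableSet_singleton b)
  calc P A = P.restrict A (⋃ b, f ⁻¹' {b}) := by
        rw [← preimage_iUnion, iUnion_of_singleton, preimage_univ, Measure.restrict_apply_univ]
    _ = ∑' b, P (A ∩ f ⁻¹' {b}) := by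
        simp only [measure_iUnion (pairwise_disjoint_fiber f) hfib,
          Measure.restrict_apply (hfib _), inter_comm]

lemma measure_comp_index_le [IsProbabilityMeasure P] {β : Type*} [MeasurableSpace β]
    {N : Ω → ℕ} {X : ℕ → Ω → β} (hN : Measurable N) (hind : IndepFun N (fun ω k => X k ω) P)
    {s : Set β} (hs : MeasurableSet s) {c : ℝ≥0∞} (hc : ∀ k, P (X k ⁻¹' s) ≤ c) :
    P {ω | X (N ω) ω ∈ s} ≤ c :=
  calc P {ω | X (N ω) ω ∈ s} = ∑' k, P ({ω | X (N ω) ω ∈ s} ∩ N ⁻¹' {k}) :=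
        measure_eq_tsum_inter_preimage_singleton hN _
    _ = ∑' k, P (N ⁻¹' {k}) * P (X k ⁻¹' s) := by
        refine tsum_congr fun k => ?_
        have hset : {ω | X (N ω) ω ∈ s} ∩ N ⁻¹' {k} =
            N ⁻¹' {k} ∩ (fun ω k => X k ω) ⁻¹' ((fun f => f k) ⁻¹' s) := by
          ext ω
          simp only [mem_inter_iff, mem_ofPred_eq, mem_preimage, mem_singleton_iff]
          constructor
          · rintro ⟨hX, rfl⟩; exact ⟨rfl, hX⟩
          · rintro ⟨rfl, hX⟩; exact ⟨hX, rfl⟩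
        rw [hset, hind.measure_inter_preimage_eq_mul _ _ (measurableSet_singleton k)
          (measurable_pi_apply k hs)]
        rfl
    _ ≤ ∑' k, P (N ⁻¹' {k}) * c := ENNReal.tsum_le_tsum fun k => mul_le_mul_right (hc k) _
    _ = c := by
        have htotal : ∑' k, P (N ⁻¹' {k}) = 1 := by
          simpa using (measure_eq_tsum_inter_preimage_singleton (P := P) hN univ).symm
        rw [ENNReal.tsum_mul_right, htotal, one_mul]

lemma measure_ge_le_of_geometric_bound {Y : Ω → ℕ} {C θ : ℝ} (hθ0 : 0 ≤ θ) (hθ1 : θ < 1)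
    (hY : ∀ j, P {ω | Y ω = j} ≤ ENNReal.ofReal (C * θ ^ j)) (m : ℕ) :
    P {ω | m ≤ Y ω} ≤ ENNReal.ofReal (C * (1 - θ)⁻¹ * θ ^ m) := by
  have hset : {ω | m ≤ Y ω} = ⋃ d : ℕ, {ω | Y ω = m + d} := by
    ext ω
    simp only [mem_ofPred_eq, mem_iUnion]
    exact ⟨fun h => ⟨Y ω - m, by omega⟩, fun ⟨d, hd⟩ => by omega⟩
  have hterm : ∀ d : ℕ, ENNReal.ofReal (C * θ ^ (m + d)) =
      ENNReal.ofReal θ ^ d * ENNReal.ofReal (C * θ ^ m) := by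
    intro d
    rw [← ENNReal.ofReal_pow hθ0, ← ENNReal.ofReal_mul (by positivity), pow_add]
    ring_nf
  calc P {ω | m ≤ Y ω} ≤ ∑' d : ℕ, P {ω | Y ω = m + d} := hset ▸ measure_iUnion_le _
    _ ≤ ∑' d : ℕ, ENNReal.ofReal θ ^ d * ENNReal.ofReal (C * θ ^ m) :=
        ENNReal.tsum_le_tsum fun d => (hY (m + d)).trans_eq (hterm d)
    _ = ENNReal.ofReal (C * (1 - θ)⁻¹ * θ ^ m) := by
        rw [ENNReal.tsum_mul_right, ENNReal.tsum_geometric, ← ENNReal.ofReal_one,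
          ← ENNReal.ofReal_sub _ hθ0, ← ENNReal.ofReal_inv_of_pos (by linarith),
          ← ENNReal.ofReal_mul (inv_pos.2 (sub_pos.2 hθ1)).le]
        ring_nf

end TotalProbability

section MarkovChain

variable {Ω : Type*} [MeasurableSpace Ω] {P : Measure Ω} {lam mu : ℝ} {x : ℕ} {η : ℕ → Ω → ℕ}

def pathUpTo (η : ℕ → Ω → ℕ) (n : ℕ) (ω : Ω) : Fin (n + 1) → ℕ := fun l => η l ω

lemma measurable_pathUpTo (hη : ∀ k, Measurable (η k)) (n : ℕ) :
    Measurable (pathUpTo η n) :=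
  measurable_pi_lambda _ fun l => hη l

namespace IsMarkovChainFrom

lemma measure_zero_eq_of_ne (hη : IsMarkovChainFrom P lam mu x η) {j : ℕ} (hj : j ≠ x) :
    P {ω | η 0 ω = j} = 0 := by
  simpa [hj] using hη.2 0 fun _ => j

lemma measure_preimage_pathUpTo_inter (hη : IsMarkovChainFrom P lam mu x η) (n : ℕ)
    (v : Fin (n + 1) → ℕ) (j : ℕ) :
    P (pathUpTo η n ⁻¹' {v} ∩ {ω | η (n + 1) ω = j}) =
      P (pathUpTo η n ⁻¹' {v}) * ENNReal.ofReal (transP lam mu (v (Fin.last n)) j) := by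
  set w : ℕ → ℕ := fun l => if h : l < n + 1 then v ⟨l, h⟩ else j
  have hcyl : pathUpTo η n ⁻¹' {v} = {ω | ∀ l ≤ n, η l ω = w l} := by
    ext ω
    simp only [mem_preimage, mem_singleton_iff, funext_iff, Fin.forall_iff, pathUpTo,
      mem_ofPred_eq, w, Nat.lt_succ_iff]
    exact forall₂_congr fun l hl => by simp [hl]
  have hcyl_succ : pathUpTo η n ⁻¹' {v} ∩ {ω | η (n + 1) ω = j} =
      {ω | ∀ l ≤ n + 1, η l ω = w l} := by
    rw [hcyl]
    ext ω
    constructor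
    · rintro ⟨hv, hj⟩ l hl
      rcases (show l ≤ n ∨ l = n + 1 by omega) with hl | rfl
      · exact hv l hl
      · simpa [w] using hj
    · intro h
      exact ⟨fun l hl => h l (by omega), by simpa [w] using h (n + 1) le_rfl⟩
  rw [hcyl_succ, hcyl, hη.2, hη.2, Finset.prod_range_succ, mul_assoc]
  simp [w, Fin.last]

lemma measure_eq_and_succ_eq (hη : IsMarkovChainFrom P lam mu x η) (k i j : ℕ) :
    P {ω | η k ω = i ∧ η (k + 1) ω = j} =
      P {ω | η k ω = i} * ENNReal.ofReal (transP lam mu i j) := by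
  have hX := measurable_pathUpTo hη.1 k
  rw [measure_eq_tsum_inter_preimage_singleton hX, measure_eq_tsum_inter_preimage_singleton hX,
    ← ENNReal.tsum_mul_right]
  refine tsum_congr fun v => ?_
  by_cases hv : v (Fin.last k) = i
  · have hpath : ∀ ω ∈ pathUpTo η k ⁻¹' {v}, η k ω = i := fun ω hω => by
      rw [← hv, ← hω]; rfl
    have h1 : {ω | η k ω = i ∧ η (k + 1) ω = j} ∩ pathUpTo η k ⁻¹' {v} =
        pathUpTo η k ⁻¹' {v} ∩ {ω | η (k + 1) ω = j} := by
      ext ω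
      exact ⟨fun ⟨⟨_, hj⟩, hω⟩ => ⟨hω, hj⟩, fun ⟨hω, hj⟩ => ⟨⟨hpath ω hω, hj⟩, hω⟩⟩
    have h2 : {ω | η k ω = i} ∩ pathUpTo η k ⁻¹' {v} = pathUpTo η k ⁻¹' {v} :=
      inter_eq_right.2 hpath
    rw [h1, h2, hη.measure_preimage_pathUpTo_inter, hv]
  · have hpath : ∀ ω ∈ pathUpTo η k ⁻¹' {v}, η k ω ≠ i := fun ω hω h => by
      rw [← h, ← hω] at hv; exact hv rfl
    have h1 : {ω | η k ω = i ∧ η (k + 1) ω = j} ∩ pathUpTo η k ⁻¹' {v} = ∅ :=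
      eq_empty_of_forall_notMem fun ω ⟨⟨hi, _⟩, hω⟩ => hpath ω hω hi
    have h2 : {ω | η k ω = i} ∩ pathUpTo η k ⁻¹' {v} = ∅ :=
      eq_empty_of_forall_notMem fun ω ⟨hi, hω⟩ => hpath ω hω hi
    rw [h1, h2, measure_empty, zero_mul]

lemma measure_succ_eq (hη : IsMarkovChainFrom P lam mu x η) (k j : ℕ) :
    P {ω | η (k + 1) ω = j} = ∑' i, P {ω | η k ω = i} * ENNReal.ofReal (transP lam mu i j) := by
  rw [measure_eq_tsum_inter_preimage_singleton (hη.1 k)]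
  refine tsum_congr fun i => ?_
  rw [← hη.measure_eq_and_succ_eq]
  congr 1
  ext ω
  exact and_comm

end IsMarkovChainFrom

end MarkovChain

section GeometricBound

lemma ENNReal.tsum_ite_lt_pow (r : ℝ≥0∞) (j : ℕ) :
    ∑' i : ℕ, (if j < i then r ^ i else 0) = r ^ (j + 1) * (1 - r)⁻¹ := by
  have hsupp : Function.support (fun i : ℕ => if j < i then r ^ i else 0) ⊆
      range (fun d : ℕ => j + 1 + d) := fun i hi => by
    by_cases h : j < i
    · exact ⟨i - (j + 1), show j + 1 + (i - (j + 1)) = i by omega⟩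
    · simp [h] at hi
  rw [← (add_right_injective (j + 1)).tsum_eq hsupp]
  simp only [show ∀ d, j < j + 1 + d by omega, if_true, pow_add, ENNReal.tsum_mul_left,
    ENNReal.tsum_geometric]

variable {lam mu : ℝ}

lemma transP_le (hlam : 0 < lam) (hmu : 0 < mu) {i j : ℕ} (hj : 2 ≤ j) :
    transP lam mu i j ≤ (if i + 1 = j then lam / (lam + mu) else 0) +
      (if j < i then mu / (lam + mu) / (j + 1) else 0) := by
  have hlm : 0 < lam + mu := by linarith
  rcases Nat.eq_zero_or_pos i with rfl | hi
  · simp [transP, show j ≠ 1 by omega, show 1 ≠ j by omega]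
  by_cases hup : i + 1 = j
  · simp [transP, hi.ne', hup, show ¬ j < i by omega]
  by_cases hdown : j < i
  · have hji : (j : ℝ) + 1 ≤ i := by exact_mod_cast hdown
    simp only [transP, hi.ne', hup, hdown, if_false, if_true, zero_add, show j ≠ i + 1 by omega]
    rw [div_div, mul_comm]
    gcongr
  · simp [transP, hi.ne', hup, hdown, show j ≠ i + 1 by omega]

lemma tsum_mul_ofReal_transP_le (hlam : 0 < lam) (hmu : 0 < mu) {θ C : ℝ}
    (hθp : lam / (lam + mu) < θ) (hθ1 : θ < 1) (hC : 0 ≤ C) {π : ℕ → ℝ≥0∞}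
    (hπ : ∀ i, π i ≤ ENNReal.ofReal (C * θ ^ i)) {j : ℕ} (hj : 2 ≤ j)
    (hjθ : θ ^ 2 * (mu / (lam + mu)) / ((1 - θ) * (θ - lam / (lam + mu))) ≤ j + 1) :
    ∑' i, π i * ENNReal.ofReal (transP lam mu i j) ≤ ENNReal.ofReal (C * θ ^ j) := by
  set p := lam / (lam + mu)
  set q := mu / (lam + mu)
  have hp : 0 < p := by positivity
  have hq : 0 < q := by positivity
  have hθ0 : 0 < θ := hp.trans hθp
  have h1θ : 0 < 1 - θ := by linarith
  have hdrift : p + θ ^ 2 * (1 - θ)⁻¹ * (q / (j + 1)) ≤ θ := by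
    rw [div_le_iff₀ (by nlinarith)] at hjθ
    have : θ ^ 2 * (1 - θ)⁻¹ * (q / (j + 1)) ≤ θ - p := by
      rw [show θ ^ 2 * (1 - θ)⁻¹ * (q / (j + 1)) = θ ^ 2 * q / ((1 - θ) * (j + 1)) by
        field_simp, div_le_iff₀ (by positivity)]
      linarith
    linarith
  have hterm : ∀ i, π i * ENNReal.ofReal (transP lam mu i j) ≤
      (if i = j - 1 then ENNReal.ofReal (C * θ ^ (j - 1) * p) else 0) +
        (if j < i then ENNReal.ofReal θ ^ i else 0) * ENNReal.ofReal (C * (q / (j + 1))) := by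
    intro i
    calc π i * ENNReal.ofReal (transP lam mu i j)
        ≤ ENNReal.ofReal (C * θ ^ i) * ENNReal.ofReal ((if i + 1 = j then p else 0) +
            (if j < i then q / (j + 1) else 0)) :=
          mul_le_mul' (hπ i) (ENNReal.ofReal_le_ofReal (transP_le hlam hmu hj))
      _ = _ := by
        rw [← ENNReal.ofReal_mul (by positivity)]
        split_ifs <;> try omega
        · rw [show j - 1 = i by omega]
          simp
        · rw [← ENNReal.ofReal_pow hθ0.le, ← ENNReal.ofReal_mul (by positivity)]
          ring_nf
        · simp
  calc ∑' i, π i * ENNReal.ofReal (transP lam mu i j)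
      ≤ ∑' i, ((if i = j - 1 then ENNReal.ofReal (C * θ ^ (j - 1) * p) else 0) +
        (if j < i then ENNReal.ofReal θ ^ i else 0) * ENNReal.ofReal (C * (q / (j + 1)))) :=
        ENNReal.tsum_le_tsum hterm
    _ = ENNReal.ofReal (C * θ ^ (j - 1) * p) +
        ENNReal.ofReal θ ^ (j + 1) * (1 - ENNReal.ofReal θ)⁻¹ *
          ENNReal.ofReal (C * (q / (j + 1))) := by
        rw [ENNReal.tsum_add, ENNReal.tsum_mul_right, ENNReal.tsum_ite_lt_pow, tsum_ite_eq]
    _ = ENNReal.ofReal (C * θ ^ (j - 1) * (p + θ ^ 2 * (1 - θ)⁻¹ * (q / (j + 1)))) := by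
        rw [← ENNReal.ofReal_one, ← ENNReal.ofReal_sub _ hθ0.le,
          ← ENNReal.ofReal_inv_of_pos h1θ, ← ENNReal.ofReal_pow hθ0.le,
          ← ENNReal.ofReal_mul (by positivity), ← ENNReal.ofReal_mul (by positivity),
          ← ENNReal.ofReal_add (by positivity) (by positivity),
          show j + 1 = j - 1 + 2 by omega]
        ring_nf
    _ ≤ ENNReal.ofReal (C * θ ^ (j - 1) * θ) :=
        ENNReal.ofReal_le_ofReal (mul_le_mul_of_nonneg_left hdrift (by positivity))
    _ = ENNReal.ofReal (C * θ ^ j) := by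
        rw [mul_assoc, ← pow_succ, Nat.sub_add_cancel (by omega)]

end GeometricBound

namespace IsMarkovChainFrom

variable {Ω : Type*} [MeasurableSpace Ω] {P : Measure Ω} [IsProbabilityMeasure P] {lam mu θ : ℝ}
  {x : ℕ} {η : ℕ → Ω → ℕ}

theorem exists_measure_eq_le_geometric (hη : IsMarkovChainFrom P lam mu x η) (hlam : 0 < lam)
    (hmu : 0 < mu) (hθp : lam / (lam + mu) < θ) (hθ1 : θ < 1) :
    ∃ C, 0 < C ∧ ∀ k j, P {ω | η k ω = j} ≤ ENNReal.ofReal (C * θ ^ j) := by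
  have hθ0 : 0 < θ := (by positivity : 0 < lam / (lam + mu)).trans hθp
  set M := θ ^ 2 * (mu / (lam + mu)) / ((1 - θ) * (θ - lam / (lam + mu)))
  set m₀ := max (max x 1) ⌈M⌉₊
  have hsmall : ∀ k j, j ≤ m₀ → P {ω | η k ω = j} ≤ ENNReal.ofReal (θ⁻¹ ^ m₀ * θ ^ j) := by
    intro k j hj
    refine prob_le_one.trans (ENNReal.one_le_ofReal.2 ?_)
    calc 1 = θ⁻¹ ^ m₀ * θ ^ m₀ := by rw [inv_pow, inv_mul_cancel₀ (by positivity)]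
      _ ≤ θ⁻¹ ^ m₀ * θ ^ j := 
          mul_le_mul_of_nonneg_left (pow_le_pow_of_le_one hθ0.le hθ1.le hj) (by positivity)
  refine ⟨θ⁻¹ ^ m₀, by positivity, fun k => ?_⟩
  induction k with
  | zero =>
    intro j
    rcases le_or_gt j m₀ with hj | hj
    · exact hsmall 0 j hj
    · rw [hη.measure_zero_eq_of_ne (by omega)]
      exact zero_le
  | succ k ih =>
    intro j
    rcases le_or_gt j m₀ with hj | hj
    · exact hsmall (k + 1) j hj
    · have hMj : M ≤ j + 1 := calc
        M ≤ ⌈M⌉₊ := Nat.le_ceil M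
        _ ≤ j + 1 := by exact_mod_cast (le_max_right _ _).trans (by omega : m₀ ≤ j + 1)
      rw [hη.measure_succ_eq]
      exact tsum_mul_ofReal_transP_le hlam hmu hθp hθ1 (by positivity) ih (by omega) hMj

theorem exists_measure_comp_ge_le (hη : IsMarkovChainFrom P lam mu x η) (hlam : 0 < lam)
    (hmu : 0 < mu) (hθp : lam / (lam + mu) < θ) (hθ1 : θ < 1) :
    ∃ C, 0 < C ∧ ∀ N : Ω → ℕ, Measurable N → IndepFun N (fun ω k => η k ω) P →
      ∀ m, P {ω | m ≤ η (N ω) ω} ≤ ENNReal.ofReal (C * θ ^ m) := by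
  have hθ0 : 0 < θ := (by positivity : 0 < lam / (lam + mu)).trans hθp
  obtain ⟨C, hC, hbound⟩ := hη.exists_measure_eq_le_geometric hlam hmu hθp hθ1
  refine ⟨C * (1 - θ)⁻¹, mul_pos hC (inv_pos.2 (sub_pos.2 hθ1)), fun N hN hind m => ?_⟩
  exact measure_comp_index_le (s := Ici m) hN hind measurableSet_Ici
    fun k => measure_ge_le_of_geometric_bound hθ0.le hθ1 (hbound k) m

end IsMarkovChainFrom

lemma pow_natCeil_le_exp {θ : ℝ} (hθ0 : 0 < θ) (hθ1 : θ ≤ 1) (y : ℝ) :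
    θ ^ ⌈y⌉₊ ≤ Real.exp (y * Real.log θ) := by
  rw [← Real.exp_log hθ0, ← Real.exp_nat_mul, Real.log_exp]
  exact Real.exp_le_exp.2
    (mul_le_mul_of_nonpos_right (Nat.le_ceil y) (Real.log_nonpos hθ0.le hθ1))

lemma limsup_inv_mul_log_le {ι : Type*} {l : Filter ι} [l.NeBot] {φ : ι → ℝ}
    (hφ : Tendsto φ l atTop) {q : ι → ℝ≥0∞} {C b : ℝ} (hC : 0 < C)
    (hq : ∀ᶠ T in l, q T ≤ ENNReal.ofReal (C * Real.exp (b * φ T))) :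
    limsup (fun T => (((φ T)⁻¹ : ℝ) : EReal) * ENNReal.log (q T)) l ≤ (b : EReal) := by
  have hbound : ∀ᶠ T in l, (((φ T)⁻¹ : ℝ) : EReal) * ENNReal.log (q T) ≤
      ((Real.log C * (φ T)⁻¹ + b : ℝ) : EReal) := by
    filter_upwards [hq, hφ.eventually_gt_atTop 0] with T hqT hφT
    rcases eq_or_ne (q T) 0 with h0 | h0
    · rw [h0, ENNReal.log_zero, EReal.mul_bot_of_pos (by exact_mod_cast inv_pos.2 hφT)]
      exact bot_le
    have hfin : q T ≠ ⊤ := ne_top_of_le_ne_top ENNReal.ofReal_ne_top hqT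
    rw [ENNReal.log_pos_real h0 hfin, ← EReal.coe_mul, EReal.coe_le_coe_iff]
    have hlog : Real.log (q T).toReal ≤ Real.log C + b * φ T := calc
      Real.log (q T).toReal ≤ Real.log (C * Real.exp (b * φ T)) :=
        Real.log_le_log (ENNReal.toReal_pos h0 hfin)
          (ENNReal.toReal_le_of_le_ofReal (by positivity) hqT)
      _ = Real.log C + b * φ T := by rw [Real.log_mul hC.ne' (Real.exp_pos _).ne', Real.log_exp]
    calc (φ T)⁻¹ * Real.log (q T).toReal ≤ (φ T)⁻¹ * (Real.log C + b * φ T) :=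
          mul_le_mul_of_nonneg_left hlog (inv_nonneg.2 hφT.le)
      _ = Real.log C * (φ T)⁻¹ + b := by field_simp
  have hlim : Tendsto (fun T => ((Real.log C * (φ T)⁻¹ + b : ℝ) : EReal)) l (𝓝 (b : EReal)) :=
    EReal.tendsto_coe.2 (by simpa using (hφ.inv_tendsto_atTop.const_mul (Real.log C)).add_const b)
  exact (limsup_le_limsup hbound).trans_eq hlim.limsup_eq

theorem mdp_upper_bound_poisson_uniform_catastrophes_general
    {Ω : Type*} [MeasurableSpace Ω] (P : Measure Ω) [IsProbabilityMeasure P]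
    (lam mu alpha : ℝ) (hlam : 0 < lam) (hmu : 0 < mu)
    (η : ℕ → Ω → ℕ) (ν : ℝ → Ω → ℕ)
    (hη : IsMarkovChainFrom P lam mu 0 η)
    (hν : IsPoissonProcess P alpha ν)
    (hind : IndepProc P η ν)
    (φ : ℝ → ℝ)
    (hφ : Tendsto φ atTop atTop)
    (x : ℝ) :
    Filter.limsup
        (fun T => (((φ T)⁻¹ : ℝ) : EReal) *
          ENNReal.log (P {ω | x ≤ (η (ν T ω) ω : ℝ) / φ T}))
        atTop
      ≤ ((-(x * Real.log ((lam + mu) / lam)) : ℝ) : EReal) := by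
  set p := lam / (lam + mu)
  have hp0 : 0 < p := by positivity
  have hp1 : p < 1 := (div_lt_one (by positivity)).2 (by linarith)
  rw [← inv_div, Real.log_inv, mul_neg, neg_neg]
  have hlog : Tendsto (fun θ => ((x * Real.log θ : ℝ) : EReal)) (𝓝[>] p)
      (𝓝 ((x * Real.log p : ℝ) : EReal)) := EReal.tendsto_coe.2
    (((Real.continuousAt_log hp0.ne').tendsto.const_mul x).mono_left nhdsWithin_le_nhds)
  refine ge_of_tendsto hlog ?_
  filter_upwards [Ioo_mem_nhdsGT hp1] with θ ⟨hpθ, hθ1⟩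
  obtain ⟨C, hC, hbound⟩ := hη.exists_measure_comp_ge_le hlam hmu hpθ hθ1
  refine limsup_inv_mul_log_le hφ hC ?_
  filter_upwards [hφ.eventually_gt_atTop 0] with T hT
  have hindT : IndepFun (ν T) (fun ω k => η k ω) P :=
    (IndepFun.comp hind measurable_id (measurable_pi_apply T)).symm
  calc P {ω | x ≤ (η (ν T ω) ω : ℝ) / φ T} = P {ω | ⌈x * φ T⌉₊ ≤ η (ν T ω) ω} := by
        simp_rw [le_div_iff₀ hT, Nat.ceil_le]
    _ ≤ ENNReal.ofReal (C * θ ^ ⌈x * φ T⌉₊) := hbound (ν T) (hν.1 T) hindT _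
    _ ≤ ENNReal.ofReal (C * Real.exp (x * Real.log θ * φ T)) := by
        refine ENNReal.ofReal_le_ofReal (mul_le_mul_of_nonneg_left ?_ hC.le)
        rw [mul_right_comm]
        exact pow_natCeil_le_exp (hp0.trans hpθ) hθ1.le (x * φ T)

/-- **Upper bound in the sublinear (moderate deviations) regime.** If `φ(T) → ∞`,
`φ(T)/T → 0`, and `φ(T)/T^a → ∞` for some `a ∈ (0,1)`, then for every `x ≥ 0`,
`limsup_{T→∞} (1/φ(T)) ln P(ξ(T)/φ(T) ≥ x) ≤ -x ln((λ+μ)/λ)`. -/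
theorem mdp_upper_bound_poisson_uniform_catastrophes
    {Ω : Type*} [MeasurableSpace Ω] (P : Measure Ω) [IsProbabilityMeasure P]
    (lam mu alpha : ℝ) (hlam : 0 < lam) (hmu : 0 < mu) (halpha : 0 < alpha)
    (η : ℕ → Ω → ℕ) (ν : ℝ → Ω → ℕ)
    (hη : IsMarkovChainFrom P lam mu 0 η)
    (hν : IsPoissonProcess P alpha ν)
    (hind : IndepProc P η ν)
    (φ : ℝ → ℝ) (hφpos : ∀ T > (0 : ℝ), 0 < φ T)
    (hφ : Tendsto φ atTop atTop)
    (hφ0 : Tendsto (fun T => φ T / T) atTop (𝓝 0))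
    (a : ℝ) (ha : a ∈ Set.Ioo (0 : ℝ) 1)
    (hφa : Tendsto (fun T => φ T / T ^ a) atTop atTop)
    (x : ℝ) (hx : 0 ≤ x) :
    Filter.limsup
        (fun T => (((φ T)⁻¹ : ℝ) : EReal) *
          ENNReal.log (P {ω | x ≤ (η (ν T ω) ω : ℝ) / φ T}))
        atTop
      ≤ ((-(x * Real.log ((lam + mu) / lam)) : ℝ) : EReal) :=
  mdp_upper_bound_poisson_uniform_catastrophes_general P lam mu alpha hlam hmu η ν hη hν hind φ hφ x
end
end

section
/- Let λ, μ, α > 0 and let φ satisfy φ(T) → ∞, φ(T)/T → 0 as T → ∞, and φ(T)/T^a → ∞ for some a ∈ (0,1). Then for every x > 0, liminf_{T→∞} (1/φ(T)) ln P(ξ_T(1) ≥ x) ≥ −x·ln((λ+μ)/λ). -/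
/-!
Force `η (ν T) ≥ n := ⌈x φ(T)⌉` by letting `ν T` take its most likely value `m = ⌊αT⌋` and the
chain climb by one at each of the last `n` steps before `m`. Whatever the path up to time
`m - n`, the climb has probability at least `(λ/(λ+μ))^n`, and Stirling's bound gives
`P(ν T = m) ≥ e⁻² / √(αT)`. As `φ(T) = o(T)`, we have `n ≤ m`; as `φ(T) ≫ T^a ≫ log T`,
the Poisson factor is negligible on the scale `φ(T)`.
-/

open MeasureTheory ProbabilityTheory Filter Set
open scoped ENNReal Topology

noncomputable section

open Real

lemma le_measure_of_forall_mul_measure_fiber_le {Ω β : Type*} [MeasurableSpace Ω]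
    [MeasurableSpace β] [Countable β] [MeasurableSingletonClass β]
    {μ : Measure Ω} [IsProbabilityMeasure μ] {f : Ω → β} (hf : Measurable f)
    {A : Set Ω} {c : ℝ≥0∞} (h : ∀ b, c * μ (f ⁻¹' {b}) ≤ μ (A ∩ f ⁻¹' {b})) :
    c ≤ μ A := by
  have hfiber (b : β) : MeasurableSet (f ⁻¹' {b}) := hf (measurableSet_singleton b)
  have hsum (ρ : Measure Ω) : ∑' b, ρ (f ⁻¹' {b}) = ρ univ := by
    rw [← measure_iUnion (pairwise_disjoint_fiber f) hfiber, ← preimage_iUnion,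
      iUnion_of_singleton, preimage_univ]
  calc c = ∑' b, c * μ (f ⁻¹' {b}) := by
        rw [ENNReal.tsum_mul_left, hsum, measure_univ, mul_one]
    _ ≤ ∑' b, μ.restrict A (f ⁻¹' {b}) := ENNReal.tsum_le_tsum fun b => by
        rw [Measure.restrict_apply (hfiber b), inter_comm]
        exact h b
    _ = μ A := by rw [hsum, Measure.restrict_apply_univ]

lemma div_le_transP_succ {lam mu : ℝ} (hlam : 0 < lam) (hmu : 0 ≤ mu) (b : ℕ) :
    lam / (lam + mu) ≤ transP lam mu b (b + 1) := by
  rcases eq_or_ne b 0 with rfl | hb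
  · simpa [transP] using div_le_one_of_le₀ (by linarith) (by linarith)
  · rw [transP, if_neg hb, if_pos rfl]

def upExtend {k : ℕ} (i : Fin (k + 1) → ℕ) (l : ℕ) : ℕ :=
  if h : l ≤ k then i ⟨l, Nat.lt_succ_of_le h⟩ else i (Fin.last k) + (l - k)

lemma upExtend_of_le {k : ℕ} (i : Fin (k + 1) → ℕ) {l : ℕ} (h : l ≤ k) :
    upExtend i l = i ⟨l, Nat.lt_succ_of_le h⟩ := dif_pos h

lemma upExtend_succ {k : ℕ} (i : Fin (k + 1) → ℕ) {l : ℕ} (h : k ≤ l) :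
    upExtend i (l + 1) = upExtend i l + 1 := by
  rcases h.eq_or_lt with rfl | h
  · rw [upExtend, dif_neg (by omega), upExtend_of_le i le_rfl, Nat.add_sub_cancel_left]
    rfl
  · rw [upExtend, upExtend, dif_neg (by omega), dif_neg (by omega)]
    omega

lemma pow_le_prod_transP_upExtend {lam mu : ℝ} (hlam : 0 < lam) (hmu : 0 ≤ mu) {k : ℕ}
    (i : Fin (k + 1) → ℕ) (n : ℕ) :
    ENNReal.ofReal ((lam / (lam + mu)) ^ n) ≤
      ∏ j ∈ Finset.range n,
        ENNReal.ofReal (transP lam mu (upExtend i (k + j)) (upExtend i (k + j + 1))) := by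
  calc ENNReal.ofReal ((lam / (lam + mu)) ^ n)
      = ∏ _j ∈ Finset.range n, ENNReal.ofReal (lam / (lam + mu)) := by
        rw [ENNReal.ofReal_pow (by positivity), Finset.prod_const, Finset.card_range]
    _ ≤ _ := Finset.prod_le_prod' fun j _ => ENNReal.ofReal_le_ofReal <| by
        rw [upExtend_succ i (Nat.le_add_right k j)]
        exact div_le_transP_succ hlam hmu _

section

variable {Ω : Type*} [MeasurableSpace Ω] {P : Measure Ω} [IsProbabilityMeasure P]
  {lam mu : ℝ} {s : ℕ} {η : ℕ → Ω → ℕ}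

theorem IsMarkovChainFrom.ofReal_pow_le_measure_climb_s5 (hη : IsMarkovChainFrom P lam mu s η)
    (hlam : 0 < lam) (hmu : 0 ≤ mu) (k n : ℕ) :
    ENNReal.ofReal ((lam / (lam + mu)) ^ n) ≤
      P {ω | ∀ j < n, η (k + j + 1) ω = η (k + j) ω + 1} := by
  obtain ⟨hmeas, hfdd⟩ := hη
  let f : Ω → Fin (k + 1) → ℕ := fun ω l => η l ω
  refine le_measure_of_forall_mul_measure_fiber_le (f := f)
    (measurable_pi_lambda _ fun l => hmeas l) fun i => ?_
  have hfiber : f ⁻¹' {i} = {ω | ∀ l ≤ k, η l ω = upExtend i l} := by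
    ext ω
    simp only [mem_preimage, mem_singleton_iff, mem_ofPred_eq, funext_iff, Fin.forall_iff,
      Nat.lt_succ_iff]
    exact forall₂_congr fun l hl => by rw [upExtend_of_le i hl]
  have hpath : {ω | ∀ l ≤ k + n, η l ω = upExtend i l} ⊆
      {ω | ∀ j < n, η (k + j + 1) ω = η (k + j) ω + 1} ∩ f ⁻¹' {i} := by
    intro ω hω
    refine ⟨fun j hj => ?_, hfiber ▸ fun l hl => hω l (by omega)⟩
    rw [hω _ (by omega), hω _ (by omega), upExtend_succ i (Nat.le_add_right k j)]
  calc ENNReal.ofReal ((lam / (lam + mu)) ^ n) * P (f ⁻¹' {i})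
      ≤ P (f ⁻¹' {i}) * ∏ j ∈ Finset.range n,
          ENNReal.ofReal (transP lam mu (upExtend i (k + j)) (upExtend i (k + j + 1))) := by
        rw [mul_comm]
        gcongr
        exact pow_le_prod_transP_upExtend hlam hmu i n
    _ = P {ω | ∀ l ≤ k + n, η l ω = upExtend i l} := by
        rw [hfiber, hfdd, hfdd, Finset.prod_range_add, mul_assoc]
    _ ≤ _ := measure_mono hpath

end

lemma factorial_le_exp_one_mul_sqrt {m : ℕ} (hm : m ≠ 0) :
    (m.factorial : ℝ) ≤ exp 1 * √m * (m / exp 1) ^ m := by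
  obtain ⟨m, rfl⟩ := Nat.exists_eq_succ_of_ne_zero hm
  have hseq : Stirling.stirlingSeq (m + 1) ≤ exp 1 / √2 :=
    Stirling.stirlingSeq_one ▸ Stirling.stirlingSeq'_antitone (Nat.zero_le m)
  have hden : 0 < √(2 * (m + 1 : ℕ) : ℝ) * ((m + 1 : ℕ) / exp 1) ^ (m + 1) := by positivity
  rw [Stirling.stirlingSeq, div_le_iff₀ hden] at hseq
  calc ((m + 1).factorial : ℝ)
      ≤ exp 1 / √2 * (√(2 * (m + 1 : ℕ) : ℝ) * ((m + 1 : ℕ) / exp 1) ^ (m + 1)) := hseq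
    _ = _ := by
        rw [Real.sqrt_mul zero_le_two]
        field_simp

lemma exp_neg_two_div_sqrt_le_poisson_floor {t : ℝ} (ht : 1 ≤ t) :
    exp (-2) / √t ≤ exp (-t) * t ^ ⌊t⌋₊ / (⌊t⌋₊.factorial : ℝ) := by
  set m := ⌊t⌋₊
  have hm : (0 : ℝ) < m := by exact_mod_cast Nat.floor_pos.mpr ht
  have hmt : (m : ℝ) ≤ t := Nat.floor_le (by linarith)
  have htm : t - 1 < m := Nat.sub_one_lt_floor t
  calc exp (-2) / √t ≤ exp (m - t - 1) * (t / m) ^ m / √m := by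
        gcongr
        exact (exp_le_exp.mpr (by linarith)).trans
          (le_mul_of_one_le_right (exp_pos _).le (one_le_pow₀ ((one_le_div hm).mpr hmt)))
    _ = exp (-t) * t ^ m / (exp 1 * √m * (m / exp 1) ^ m) := by
        rw [div_pow, div_pow, ← exp_nat_mul, mul_one, exp_sub, exp_sub, exp_neg]
        field_simp
    _ ≤ _ := by
        gcongr
        exact factorial_le_exp_one_mul_sqrt (by exact_mod_cast hm.ne')

section

variable {Ω : Type*} [MeasurableSpace Ω] {P : Measure Ω}

lemma IsPoissonProcess.measure_eq_s5 {α : ℝ} {ν : ℝ → Ω → ℕ} (hν : IsPoissonProcess P α ν)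
    {t : ℝ} (ht : 0 ≤ t) (k : ℕ) :
    P {ω | ν t ω = k} = ENNReal.ofReal (exp (-(α * t)) * (α * t) ^ k / k.factorial) := by
  simpa [hν.2.1] using hν.2.2.2.2 0 t le_rfl ht k

lemma IndepProc.measure_climb_mul_le {η : ℕ → Ω → ℕ} {ν : ℝ → Ω → ℕ}
    (hind : IndepProc P η ν) (t : ℝ) (k n : ℕ) :
    P {ω | ∀ j < n, η (k + j + 1) ω = η (k + j) ω + 1} * P {ω | ν t ω = k + n} ≤
      P {ω | n ≤ η (ν t ω) ω} := by
  have hclimb_meas : MeasurableSet {f : ℕ → ℕ | ∀ j < n, f (k + j + 1) = f (k + j) + 1} := by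
    simp only [ofPred_forall]
    exact .iInter fun j => .iInter fun _ =>
      measurableSet_eq_fun (measurable_pi_apply _) ((measurable_pi_apply _).add_const 1)
  have hν_meas : MeasurableSet {g : ℝ → ℕ | g t = k + n} :=
    measurable_pi_apply t (measurableSet_singleton _)
  refine (hind.measure_inter_preimage_eq_mul _ _ hclimb_meas hν_meas).symm.trans_le
    (measure_mono fun ω ⟨(hω : ∀ j < n, η (k + j + 1) ω = η (k + j) ω + 1),
      (hνω : ν t ω = k + n)⟩ => ?_)
  have hclimb : ∀ j ≤ n, η (k + j) ω = η k ω + j := by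
    intro j hj
    induction j with
    | zero => rfl
    | succ j ih => rw [← add_assoc, hω j hj, ih (by omega), add_assoc]
  rw [mem_ofPred_eq, hνω, hclimb n le_rfl]
  exact Nat.le_add_left n _

variable [IsProbabilityMeasure P] {lam mu alpha : ℝ} {s : ℕ} {η : ℕ → Ω → ℕ} {ν : ℝ → Ω → ℕ}

theorem ofReal_le_measure_nat_le_catastrophe (hη : IsMarkovChainFrom P lam mu s η)
    (hν : IsPoissonProcess P alpha ν) (hind : IndepProc P η ν) (hlam : 0 < lam)
    (hmu : 0 ≤ mu) (halpha : 0 < alpha) {T : ℝ} (hT : 1 ≤ alpha * T) {n : ℕ}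
    (hn : (n : ℝ) ≤ alpha * T) :
    ENNReal.ofReal ((lam / (lam + mu)) ^ n * (exp (-2) / √(alpha * T))) ≤
      P {ω | n ≤ η (ν T ω) ω} := by
  set m := ⌊alpha * T⌋₊
  have hnm : n ≤ m := Nat.le_floor hn
  have hT0 : 0 ≤ T := nonneg_of_mul_nonneg_right (by linarith) halpha
  calc ENNReal.ofReal ((lam / (lam + mu)) ^ n * (exp (-2) / √(alpha * T)))
      = ENNReal.ofReal ((lam / (lam + mu)) ^ n) * ENNReal.ofReal (exp (-2) / √(alpha * T)) :=
        ENNReal.ofReal_mul (by positivity)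
    _ ≤ P {ω | ∀ j < n, η (m - n + j + 1) ω = η (m - n + j) ω + 1} *
          P {ω | ν T ω = m - n + n} := by
        gcongr
        · exact hη.ofReal_pow_le_measure_climb_s5 hlam hmu _ _
        · rw [Nat.sub_add_cancel hnm, hν.measure_eq_s5 hT0]
          exact ENNReal.ofReal_le_ofReal (exp_neg_two_div_sqrt_le_poisson_floor hT)
    _ ≤ _ := hind.measure_climb_mul_le T _ _

end

lemma le_liminf_inv_mul_log_of_ofReal_le {ι : Type*} {l : Filter ι} [l.NeBot]
    {φ p : ι → ℝ} {m : ι → ℝ≥0∞} {L : ℝ} (hφ : ∀ᶠ i in l, 0 ≤ φ i)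
    (hp : ∀ᶠ i in l, 0 < p i ∧ ENNReal.ofReal (p i) ≤ m i)
    (hL : Tendsto (fun i => (φ i)⁻¹ * log (p i)) l (𝓝 L)) :
    (L : EReal) ≤ liminf (fun i => (((φ i)⁻¹ : ℝ) : EReal) * ENNReal.log (m i)) l := by
  rw [← (EReal.tendsto_coe.mpr hL).liminf_eq]
  refine liminf_le_liminf ?_
  filter_upwards [hφ, hp] with i hφi ⟨hpi, hpm⟩
  rw [EReal.coe_mul, ← ENNReal.log_ofReal_of_pos hpi]
  exact mul_le_mul_of_nonneg_left (ENNReal.log_monotone hpm)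
    (EReal.coe_nonneg.mpr (inv_nonneg.mpr hφi))

lemma tendsto_log_div_of_tendsto_div_rpow {φ : ℝ → ℝ} {a : ℝ} (ha : 0 < a)
    (hφa : Tendsto (fun T => φ T / T ^ a) atTop atTop) :
    Tendsto (fun T => log T / φ T) atTop (𝓝 0) := by
  have h := (isLittleO_log_rpow_atTop ha).tendsto_div_nhds_zero.mul hφa.inv_tendsto_atTop
  rw [zero_mul] at h
  refine h.congr' ?_
  filter_upwards [eventually_gt_atTop 0] with T hT
  rw [Pi.inv_apply, inv_div, div_mul_div_cancel₀ (rpow_pos_of_pos hT a).ne']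

lemma eventually_mul_add_one_le_of_tendsto_div {φ : ℝ → ℝ}
    (hφ0 : Tendsto (fun T => φ T / T) atTop (𝓝 0)) (x : ℝ) {alpha : ℝ} (halpha : 0 < alpha) :
    ∀ᶠ T in atTop, x * φ T + 1 ≤ alpha * T := by
  have h : Tendsto (fun T => x * (φ T / T) + T⁻¹) atTop (𝓝 0) := by
    simpa using (hφ0.const_mul x).add tendsto_inv_atTop_zero
  filter_upwards [h.eventually (gt_mem_nhds halpha), eventually_gt_atTop 0] with T hlt hT
  calc x * φ T + 1 = (x * (φ T / T) + T⁻¹) * T := by field_simp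
    _ ≤ alpha * T := mul_le_mul_of_nonneg_right hlt.le hT.le

lemma tendsto_inv_mul_log_pow_ceil_mul {φ : ℝ → ℝ} {a alpha r x : ℝ} (ha : 0 < a)
    (halpha : 0 < alpha) (hr : 0 < r) (hx : 0 ≤ x) (hφ : Tendsto φ atTop atTop)
    (hφa : Tendsto (fun T => φ T / T ^ a) atTop atTop) :
    Tendsto (fun T => (φ T)⁻¹ * log (r ^ ⌈x * φ T⌉₊ * (exp (-2) / √(alpha * T)))) atTop
      (𝓝 (x * log r)) := by
  have hceil := (tendsto_nat_ceil_mul_div_atTop hx).comp hφ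
  have hconst := (tendsto_const_nhds (x := 2 + log alpha / 2)).div_atTop hφ
  have h := ((hceil.mul_const (log r)).sub hconst).sub
    ((tendsto_log_div_of_tendsto_div_rpow ha hφa).div_const 2)
  rw [sub_zero, zero_div, sub_zero] at h
  refine h.congr' ?_
  filter_upwards [eventually_gt_atTop 0] with T hT
  have hαT : 0 < alpha * T := by positivity
  rw [Function.comp_apply, log_mul (by positivity) (by positivity), log_pow,
    log_div (exp_pos _).ne' (sqrt_pos.mpr hαT).ne', log_exp, log_sqrt hαT.le,
    log_mul halpha.ne' hT.ne']
  ring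

theorem mdp_lower_bound_poisson_uniform_catastrophes_general
    {Ω : Type*} [MeasurableSpace Ω] (P : Measure Ω) [IsProbabilityMeasure P]
    (lam mu alpha : ℝ) (hlam : 0 < lam) (hmu : 0 < mu) (halpha : 0 < alpha)
    (η : ℕ → Ω → ℕ) (ν : ℝ → Ω → ℕ)
    (hη : IsMarkovChainFrom P lam mu 0 η)
    (hν : IsPoissonProcess P alpha ν)
    (hind : IndepProc P η ν)
    (φ : ℝ → ℝ)
    (hφ : Tendsto φ atTop atTop)
    (hφ0 : Tendsto (fun T => φ T / T) atTop (𝓝 0))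
    (a : ℝ) (ha : a ∈ Set.Ioo (0 : ℝ) 1)
    (hφa : Tendsto (fun T => φ T / T ^ a) atTop atTop)
    (x : ℝ) (hx : 0 < x) :
    ((-(x * Real.log ((lam + mu) / lam)) : ℝ) : EReal) ≤
      Filter.liminf
        (fun T => (((φ T)⁻¹ : ℝ) : EReal) *
          ENNReal.log (P {ω | x ≤ (η (ν T ω) ω : ℝ) / φ T}))
        atTop := by
  have hr : 0 < lam / (lam + mu) := by positivity
  rw [← inv_div, log_inv, mul_neg, neg_neg]
  refine le_liminf_inv_mul_log_of_ofReal_le (hφ.eventually_ge_atTop 0) ?_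
    (tendsto_inv_mul_log_pow_ceil_mul ha.1 halpha hr hx.le hφ hφa)
  filter_upwards [hφ.eventually_gt_atTop 0,
    eventually_mul_add_one_le_of_tendsto_div hφ0 x halpha] with T hφT hT
  have hxφ : 0 < x * φ T := mul_pos hx hφT
  have hαT : 1 ≤ alpha * T := by linarith
  refine ⟨by positivity, ?_⟩
  refine (ofReal_le_measure_nat_le_catastrophe hη hν hind hlam hmu.le halpha hαT
    ((Nat.ceil_lt_add_one hxφ.le).le.trans hT)).trans (measure_mono fun ω hω => ?_)
  rw [mem_ofPred_eq, le_div_iff₀ hφT]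
  exact (Nat.le_ceil _).trans (Nat.cast_le.mpr hω)

/-- **Lower bound in the sublinear (moderate deviations) regime.** If `φ(T) → ∞`,
`φ(T)/T → 0`, and `φ(T)/T^a → ∞` for some `a ∈ (0,1)`, then for every `x > 0`,
`liminf_{T→∞} (1/φ(T)) ln P(ξ(T)/φ(T) ≥ x) ≥ -x ln((λ+μ)/λ)`. -/
theorem mdp_lower_bound_poisson_uniform_catastrophes
    {Ω : Type*} [MeasurableSpace Ω] (P : Measure Ω) [IsProbabilityMeasure P]
    (lam mu alpha : ℝ) (hlam : 0 < lam) (hmu : 0 < mu) (halpha : 0 < alpha)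
    (η : ℕ → Ω → ℕ) (ν : ℝ → Ω → ℕ)
    (hη : IsMarkovChainFrom P lam mu 0 η)
    (hν : IsPoissonProcess P alpha ν)
    (hind : IndepProc P η ν)
    (φ : ℝ → ℝ) (hφpos : ∀ T > (0 : ℝ), 0 < φ T)
    (hφ : Tendsto φ atTop atTop)
    (hφ0 : Tendsto (fun T => φ T / T) atTop (𝓝 0))
    (a : ℝ) (ha : a ∈ Set.Ioo (0 : ℝ) 1)
    (hφa : Tendsto (fun T => φ T / T ^ a) atTop atTop)
    (x : ℝ) (hx : 0 < x) :
    ((-(x * Real.log ((lam + mu) / lam)) : ℝ) : EReal) ≤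
      Filter.liminf
        (fun T => (((φ T)⁻¹ : ℝ) : EReal) *
          ENNReal.log (P {ω | x ≤ (η (ν T ω) ω : ℝ) / φ T}))
        atTop :=
  mdp_lower_bound_poisson_uniform_catastrophes_general P lam mu alpha hlam hmu halpha η ν hη hν hind
    φ hφ hφ0 a ha hφa x hx
end
end

section
/- Let ν be a random variable with Poisson distribution of mean M > 0. Then P(ν < M/(6·ln 3)) ≤ exp(−M/2). -/
open MeasureTheory ProbabilityTheory Filter Set
open scoped ENNReal

/-- If `ν` is Poisson with mean `M > 0`, then `P(ν < M/(6 ln 3)) ≤ exp(-M/2)`. -/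
theorem poisson_lower_tail_half
    {Ω : Type*} [MeasurableSpace Ω] (P : Measure Ω) [IsProbabilityMeasure P]
    (M : ℝ) (hM : 0 < M) (ν : Ω → ℕ)
    (hpois : ∀ n : ℕ,
      P {ω | ν ω = n} = ENNReal.ofReal (Real.exp (-M) * M ^ n / (Nat.factorial n))) :
    P {ω | (ν ω : ℝ) < M / (6 * Real.log 3)} ≤ ENNReal.ofReal (Real.exp (-(M / 2))) := by
  have hlog : 0 < Real.log 3 := Real.log_pos (by norm_num)
  set a : ℝ := M / (6 * Real.log 3) with ha
  set N := ⌈a⌉₊ with hN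
  have hsub : {ω | (ν ω : ℝ) < a} ⊆ ⋃ n ∈ Finset.range N, {ω | ν ω = n} := by
    intro ω hω
    simp only [Set.mem_iUnion, Finset.mem_range]
    exact ⟨ν ω, Nat.lt_ceil.mpr hω, rfl⟩
  have hnonneg : ∀ n ∈ Finset.range N,
      0 ≤ Real.exp (-M) * M ^ n / (Nat.factorial n) := by
    intro n _
    positivity
  have hreal : ∑ n ∈ Finset.range N, Real.exp (-M) * M ^ n / (Nat.factorial n)
      ≤ Real.exp (-(M / 2)) := by
    have hterm : ∀ n ∈ Finset.range N,
        Real.exp (-M) * M ^ n / (Nat.factorial n)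
          ≤ Real.exp (-M) * ((3 : ℝ) ^ a * ((M / 3) ^ n / (Nat.factorial n))) := by
      intro n hn
      have hna : (n : ℝ) < a := Nat.lt_ceil.mp (Finset.mem_range.mp hn)
      have h3 : (3 : ℝ) ^ (n : ℝ) ≤ (3 : ℝ) ^ a :=
        Real.rpow_le_rpow_of_exponent_le (by norm_num) hna.le
      rw [Real.rpow_natCast] at h3
      have hMn : M ^ n = 3 ^ n * (M / 3) ^ n := by
        rw [← mul_pow]; ring_nf
      calc Real.exp (-M) * M ^ n / (Nat.factorial n)
          = (3 : ℝ) ^ n * (Real.exp (-M) * ((M / 3) ^ n / (Nat.factorial n))) := by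
            rw [hMn]; ring
        _ ≤ (3 : ℝ) ^ a * (Real.exp (-M) * ((M / 3) ^ n / (Nat.factorial n))) :=
            mul_le_mul_of_nonneg_right h3 (by positivity)
        _ = Real.exp (-M) * ((3 : ℝ) ^ a * ((M / 3) ^ n / (Nat.factorial n))) := by ring
    calc ∑ n ∈ Finset.range N, Real.exp (-M) * M ^ n / (Nat.factorial n)
        ≤ ∑ n ∈ Finset.range N,
            Real.exp (-M) * ((3 : ℝ) ^ a * ((M / 3) ^ n / (Nat.factorial n))) :=
          Finset.sum_le_sum hterm
      _ = Real.exp (-M) * (3 : ℝ) ^ a *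
            ∑ n ∈ Finset.range N, (M / 3) ^ n / (Nat.factorial n) := by
          rw [Finset.mul_sum]
          exact Finset.sum_congr rfl fun n _ => by ring
      _ ≤ Real.exp (-M) * (3 : ℝ) ^ a * Real.exp (M / 3) := by
          exact mul_le_mul_of_nonneg_left
            (Real.sum_le_exp_of_nonneg (by positivity) N) (by positivity)
      _ = Real.exp (-(M / 2)) := by
          rw [Real.rpow_def_of_pos (by norm_num : (0:ℝ) < 3),
            ← Real.exp_add, ← Real.exp_add]
          congr 1
          have : Real.log 3 * a = M / 6 := by
            rw [ha]; field_simp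
          rw [this]; ring
  calc P {ω | (ν ω : ℝ) < a}
      ≤ ∑ n ∈ Finset.range N, P {ω | ν ω = n} :=
        (measure_mono hsub).trans (measure_biUnion_finset_le _ _)
    _ = ENNReal.ofReal (∑ n ∈ Finset.range N,
          Real.exp (-M) * M ^ n / (Nat.factorial n)) := by
        rw [ENNReal.ofReal_sum_of_nonneg hnonneg]
        exact Finset.sum_congr rfl fun n _ => hpois n
    _ ≤ ENNReal.ofReal (Real.exp (-(M / 2))) := ENNReal.ofReal_le_ofReal hreal
end

section
/- Let b > 0 and let φ(T) → ∞ as T → ∞. For each T let N_T be a random variable with Poisson distribution of mean b·φ(T). Then for every x ≥ b, lim_{T→∞} (1/φ(T)) ln P(N_T ≥ x·φ(T)) = −( x·ln(x/b) − x + b ). -/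
open MeasureTheory ProbabilityTheory Filter Set
open scoped ENNReal Topology


lemma log_factorial_bounds : ∀ n : ℕ, 1 ≤ n →
    (n:ℝ) * Real.log n - n + 1 ≤ Real.log (n.factorial) ∧
    Real.log (n.factorial) ≤ (n:ℝ) * Real.log n - n + 1 + Real.log n := by
  intro n hn
  induction n with
  | zero => omega
  | succ m ih =>
    rcases Nat.eq_or_lt_of_le hn with h1 | h1
    · simp [← h1]
    · have hm : 1 ≤ m := by omega
      obtain ⟨ihl, ihu⟩ := ih hm
      have hmpos : (0:ℝ) < m := by exact_mod_cast hm
      have hm1pos : (0:ℝ) < (m:ℝ) + 1 := by linarith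
      have hfe : Real.log ((m+1).factorial) = Real.log (m.factorial) + Real.log ((m:ℝ)+1) := by
        rw [Nat.factorial_succ, Nat.cast_mul, Real.log_mul (by positivity) (by positivity)]
        push_cast; ring
      -- key inequalities
      have key1 : Real.log ((m:ℝ)+1) - Real.log m ≤ 1 / m := by
        rw [← Real.log_div (by positivity) (by positivity)]
        have := Real.log_le_sub_one_of_pos (x := ((m:ℝ)+1)/m) (by positivity)
        have : ((m:ℝ)+1)/m - 1 = 1/m := by field_simp; ring
        linarith [Real.log_le_sub_one_of_pos (x := ((m:ℝ)+1)/m) (by positivity)]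
      have key2 : 1 / ((m:ℝ)+1) ≤ Real.log ((m:ℝ)+1) - Real.log m := by
        rw [← Real.log_div (by positivity) (by positivity)]
        have h := Real.log_le_sub_one_of_pos (x := (m:ℝ)/(m+1)) (by positivity)
        have e1 : (m:ℝ)/(m+1) - 1 = -(1/(m+1)) := by field_simp; ring
        have e2 : Real.log ((m:ℝ)/(m+1)) = - Real.log (((m:ℝ)+1)/m) := by
          rw [← Real.log_inv]; congr 1; field_simp
        rw [e2, e1] at h; linarith
      have k1 : (m:ℝ) * (Real.log ((m:ℝ)+1) - Real.log m) ≤ 1 := by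
        calc (m:ℝ) * (Real.log ((m:ℝ)+1) - Real.log m) ≤ (m:ℝ) * (1/m) :=
              mul_le_mul_of_nonneg_left key1 hmpos.le
          _ = 1 := by field_simp
      have k2 : (1:ℝ) ≤ ((m:ℝ)+1) * (Real.log ((m:ℝ)+1) - Real.log m) := by
        calc (1:ℝ) = ((m:ℝ)+1) * (1/((m:ℝ)+1)) := by field_simp
          _ ≤ _ := mul_le_mul_of_nonneg_left key2 hm1pos.le
      constructor
      · push_cast
        rw [hfe]
        nlinarith [k1]
      · push_cast
        rw [hfe]
        nlinarith [k2]

noncomputable def pterm (m : ℝ) (n : ℕ) : ℝ :=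
  Real.exp (-m) * m ^ n / (Nat.factorial n)

lemma pterm_pos {m : ℝ} (hm : 0 < m) (n : ℕ) : 0 < pterm m n := by
  unfold pterm
  have := Nat.factorial_pos n
  positivity

lemma pterm_succ (m : ℝ) (n : ℕ) : pterm m (n + 1) = pterm m n * (m / (n + 1)) := by
  unfold pterm
  rw [Nat.factorial_succ, pow_succ]
  push_cast
  have h1 : ((n : ℝ) + 1) ≠ 0 := by positivity
  have h2 : ((n.factorial : ℝ)) ≠ 0 := by exact_mod_cast (Nat.factorial_pos n).ne'
  field_simp

lemma log_pterm {m : ℝ} (hm : 0 < m) (n : ℕ) :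
    Real.log (pterm m n) = -m + n * Real.log m - Real.log (Nat.factorial n) := by
  unfold pterm
  have h2 : ((n.factorial : ℝ)) ≠ 0 := by exact_mod_cast (Nat.factorial_pos n).ne'
  rw [Real.log_div (by positivity) h2, Real.log_mul (Real.exp_ne_zero _) (by positivity),
    Real.log_exp, Real.log_pow]

lemma pterm_tail_le {m : ℝ} (hm : 0 < m) (n₀ : ℕ) {r : ℝ} (hr0 : 0 < r)
    (hmr : m ≤ r * n₀) : ∀ j, pterm m (n₀ + j) ≤ pterm m n₀ * r ^ j := by
  intro j
  induction j with
  | zero => simp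
  | succ k ih =>
    have hdiv : m / ((n₀ : ℝ) + k + 1) ≤ r := by
      rw [div_le_iff₀ (by positivity)]
      nlinarith [hr0.le, (Nat.cast_nonneg (α := ℝ) k)]
    have hstep : pterm m (n₀ + (k + 1)) = pterm m (n₀ + k) * (m / ((n₀ : ℝ) + k + 1)) := by
      have := pterm_succ m (n₀ + k)
      rw [← Nat.add_assoc] at *
      rw [this]
      push_cast
      ring_nf
    rw [hstep, pow_succ, ← mul_assoc]
    have h1 : pterm m (n₀ + k) * (m / ((n₀:ℝ) + k + 1)) ≤ (pterm m n₀ * r ^ k) * r := by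
      apply mul_le_mul ih hdiv (div_nonneg hm.le (by positivity)) (mul_nonneg (pterm_pos hm n₀).le (pow_nonneg hr0.le k))
    calc pterm m (n₀ + k) * (m / ((n₀:ℝ) + k + 1)) ≤ (pterm m n₀ * r ^ k) * r := h1
      _ = pterm m n₀ * r ^ k * r := by ring

lemma real_limit (b x : ℝ) (hb : 0 < b) (hx : b ≤ x)
    (φ : ℝ → ℝ) (hφ : Tendsto φ atTop atTop)
    (p : ℝ → ℝ)
    (hlb : ∀ᶠ T in atTop, pterm (b * φ T) ⌈x * φ T⌉₊ ≤ p T)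
    (hub1 : ∀ᶠ T in atTop, p T ≤ 1)
    (hub2 : b < x → ∀ᶠ T in atTop, p T ≤ pterm (b * φ T) ⌈x * φ T⌉₊ * (1 - b / x)⁻¹) :
    Tendsto (fun T => (φ T)⁻¹ * Real.log (p T)) atTop
      (𝓝 (-(x * Real.log (x / b) - x + b))) := by
  have hx0 : 0 < x := hb.trans_le hx
  have hφ1 : ∀ᶠ T in atTop, 1 ≤ φ T := hφ.eventually_ge_atTop 1
  have h1φ : Tendsto (fun T => (φ T)⁻¹) atTop (𝓝 0) := tendsto_inv_atTop_zero.comp hφ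
  -- u T := ⌈x φ T⌉₊ / φ T tends to x
  have hu : Tendsto (fun T => (⌈x * φ T⌉₊ : ℝ) / φ T) atTop (𝓝 x) := by
    apply tendsto_of_tendsto_of_tendsto_of_le_of_le'
      (tendsto_const_nhds (x := x)) (by simpa using tendsto_const_nhds.add h1φ :
        Tendsto (fun T => x + (φ T)⁻¹) atTop (𝓝 x))
    · filter_upwards [hφ1] with T h1
      have hφT : (0:ℝ) < φ T := lt_of_lt_of_le one_pos h1
      rw [le_div_iff₀ hφT]
      exact Nat.le_ceil _
    · filter_upwards [hφ1] with T h1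
      have hφT : (0:ℝ) < φ T := lt_of_lt_of_le one_pos h1
      rw [div_le_iff₀ hφT]
      have h2 := (Nat.ceil_lt_add_one (by positivity : (0:ℝ) ≤ x * φ T)).le
      calc (⌈x * φ T⌉₊ : ℝ) ≤ x * φ T + 1 := h2
        _ = (x + (φ T)⁻¹) * φ T := by field_simp
  -- log ⌈x φ T⌉₊ / φ T tends to 0
  have hlogn : Tendsto (fun T => Real.log (⌈x * φ T⌉₊ : ℝ) / φ T) atTop (𝓝 0) := by
    have h0 : Tendsto (fun t : ℝ => Real.log (x * t + 1) / t) atTop (𝓝 0) := by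
      have ha := Real.tendsto_pow_log_div_mul_add_atTop 1 0 1 one_ne_zero
      have hb1 : Tendsto (fun t : ℝ => x * t + 1) atTop atTop :=
        tendsto_atTop_add_const_right _ 1 (tendsto_id.const_mul_atTop hx0)
      have hsecond : Tendsto (fun t : ℝ => x + t⁻¹) atTop (𝓝 x) := by
        simpa using tendsto_const_nhds.add
          (tendsto_inv_atTop_zero : Tendsto (fun t:ℝ => t⁻¹) atTop (𝓝 0))
      have hprod := (ha.comp hb1).mul hsecond
      rw [zero_mul] at hprod
      apply hprod.congr'
      filter_upwards [eventually_gt_atTop (0:ℝ)] with t ht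
      have hxt : (0:ℝ) < x * t + 1 := by positivity
      simp only [Function.comp]
      rw [pow_one]
      field_simp
      ring
    apply tendsto_of_tendsto_of_tendsto_of_le_of_le'
      (tendsto_const_nhds (x := (0:ℝ))) (h0.comp hφ)
    · filter_upwards [hφ1] with T h1
      have hφT : (0:ℝ) < φ T := lt_of_lt_of_le one_pos h1
      have hn1 : (1:ℝ) ≤ (⌈x * φ T⌉₊ : ℝ) := by
        exact_mod_cast Nat.one_le_ceil_iff.mpr (by positivity)
      exact div_nonneg (Real.log_nonneg hn1) hφT.le
    · filter_upwards [hφ1] with T h1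
      have hφT : (0:ℝ) < φ T := lt_of_lt_of_le one_pos h1
      have hn1 : (1:ℝ) ≤ (⌈x * φ T⌉₊ : ℝ) := by
        exact_mod_cast Nat.one_le_ceil_iff.mpr (by positivity)
      have hle : Real.log (⌈x * φ T⌉₊ : ℝ) ≤ Real.log (x * φ T + 1) :=
        Real.log_le_log (by linarith) (Nat.ceil_lt_add_one (by positivity)).le
      simp only [Function.comp]
      exact (div_le_div_iff_of_pos_right hφT).mpr hle
  -- the main continuous part
  have hg : Tendsto (fun T => -b - ((⌈x * φ T⌉₊ : ℝ) / φ T) *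
      Real.log (((⌈x * φ T⌉₊ : ℝ) / φ T) / b) + ((⌈x * φ T⌉₊ : ℝ) / φ T)) atTop
      (𝓝 (-(x * Real.log (x / b) - x + b))) := by
    have hc : ContinuousAt (fun u : ℝ => -b - u * Real.log (u / b) + u) x := by
      have h1 : ContinuousAt Real.log (x / b) := Real.continuousAt_log (by positivity)
      have h2 : ContinuousAt (fun u : ℝ => Real.log (u / b)) x :=
        ContinuousAt.comp (f := fun u : ℝ => u / b) h1 (continuousAt_id.div_const b)
      exact (continuousAt_const.sub (continuousAt_id.mul h2)).add continuousAt_id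
    have heq : -(x * Real.log (x / b) - x + b) = -b - x * Real.log (x / b) + x := by ring
    rw [heq]
    simpa [Function.comp_def] using hc.tendsto.comp hu
  -- lower and upper sandwich functions
  have hglow : Tendsto (fun T => (-b - ((⌈x * φ T⌉₊ : ℝ) / φ T) *
      Real.log (((⌈x * φ T⌉₊ : ℝ) / φ T) / b) + ((⌈x * φ T⌉₊ : ℝ) / φ T)) - (φ T)⁻¹
      - Real.log (⌈x * φ T⌉₊ : ℝ) / φ T) atTop (𝓝 (-(x * Real.log (x / b) - x + b))) := by
    simpa using (hg.sub h1φ).sub hlogn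
  have hgup : ∀ c : ℝ, Tendsto (fun T => (-b - ((⌈x * φ T⌉₊ : ℝ) / φ T) *
      Real.log (((⌈x * φ T⌉₊ : ℝ) / φ T) / b) + ((⌈x * φ T⌉₊ : ℝ) / φ T)) - (φ T)⁻¹
      + (φ T)⁻¹ * c) atTop (𝓝 (-(x * Real.log (x / b) - x + b))) := by
    intro c
    simpa using (hg.sub h1φ).add (h1φ.mul_const c)
  -- pointwise: identity and Stirling bounds
  have hkey : ∀ T, 1 ≤ φ T →
      ((-b - ((⌈x * φ T⌉₊ : ℝ) / φ T) * Real.log (((⌈x * φ T⌉₊ : ℝ) / φ T) / b)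
        + ((⌈x * φ T⌉₊ : ℝ) / φ T)) - (φ T)⁻¹ - Real.log (⌈x * φ T⌉₊ : ℝ) / φ T
        ≤ (φ T)⁻¹ * Real.log (pterm (b * φ T) ⌈x * φ T⌉₊)) ∧
      ((φ T)⁻¹ * Real.log (pterm (b * φ T) ⌈x * φ T⌉₊) ≤
        (-b - ((⌈x * φ T⌉₊ : ℝ) / φ T) * Real.log (((⌈x * φ T⌉₊ : ℝ) / φ T) / b)
        + ((⌈x * φ T⌉₊ : ℝ) / φ T)) - (φ T)⁻¹) := by
    intro T h1
    have hφT : (0:ℝ) < φ T := lt_of_lt_of_le one_pos h1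
    have hM : (0:ℝ) < b * φ T := by positivity
    have hn1 : 1 ≤ ⌈x * φ T⌉₊ := Nat.one_le_ceil_iff.mpr (by positivity)
    have hn1' : (1:ℝ) ≤ (⌈x * φ T⌉₊ : ℝ) := by exact_mod_cast hn1
    have hnpos : (0:ℝ) < (⌈x * φ T⌉₊ : ℝ) := by linarith
    obtain ⟨hs1, hs2⟩ := log_factorial_bounds ⌈x * φ T⌉₊ hn1
    have hlp := log_pterm hM ⌈x * φ T⌉₊
    set c : ℝ := (⌈x * φ T⌉₊ : ℝ) with hc
    set t : ℝ := φ T with ht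
    have hlog1 : Real.log ((c / t) / b) = Real.log c - Real.log t - Real.log b := by
      rw [Real.log_div (by positivity) hb.ne', Real.log_div (by positivity) (by positivity)]
    have hlog2 : Real.log (b * t) = Real.log b + Real.log t :=
      Real.log_mul hb.ne' (by positivity)
    constructor
    · rw [hlp, hlog2]
      calc (-b - c / t * Real.log (c / t / b) + c / t) - t⁻¹ - Real.log c / t
          = t⁻¹ * (-(b * t) + c * (Real.log b + Real.log t)
            - (c * Real.log c - c + 1 + Real.log c)) := by
            rw [hlog1]; field_simp; ring
        _ ≤ t⁻¹ * (-(b * t) + c * (Real.log b + Real.log t)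
            - Real.log (Nat.factorial ⌈x * φ T⌉₊)) := by
            apply mul_le_mul_of_nonneg_left (by linarith) (inv_nonneg.mpr hφT.le)
    · rw [hlp, hlog2]
      calc t⁻¹ * (-(b * t) + c * (Real.log b + Real.log t)
            - Real.log (Nat.factorial ⌈x * φ T⌉₊))
          ≤ t⁻¹ * (-(b * t) + c * (Real.log b + Real.log t)
            - (c * Real.log c - c + 1)) := by
            apply mul_le_mul_of_nonneg_left (by linarith) (inv_nonneg.mpr hφT.le)
        _ = (-b - c / t * Real.log (c / t / b) + c / t) - t⁻¹ := by
            rw [hlog1]; field_simp; ring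
  -- final squeeze
  rcases eq_or_lt_of_le hx with heq | hlt
  · subst heq
    have hL : -(b * Real.log (b / b) - b + b) = 0 := by
      rw [div_self hb.ne', Real.log_one]; ring
    rw [hL]
    rw [hL] at hglow
    apply tendsto_of_tendsto_of_tendsto_of_le_of_le' hglow
      (tendsto_const_nhds (x := (0:ℝ)))
    · filter_upwards [hφ1, hlb] with T h1 hlbT
      have hφT : (0:ℝ) < φ T := lt_of_lt_of_le one_pos h1
      have hM : (0:ℝ) < b * φ T := by positivity
      refine ((hkey T h1).1).trans ?_
      exact mul_le_mul_of_nonneg_left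
        (Real.log_le_log (pterm_pos hM _) hlbT) (inv_nonneg.mpr hφT.le)
    · filter_upwards [hφ1, hlb, hub1] with T h1 hlbT hub1T
      have hφT : (0:ℝ) < φ T := lt_of_lt_of_le one_pos h1
      have hM : (0:ℝ) < b * φ T := by positivity
      have hppos : 0 < p T := lt_of_lt_of_le (pterm_pos hM _) hlbT
      have hlogp : Real.log (p T) ≤ 0 := Real.log_nonpos hppos.le hub1T
      exact mul_nonpos_of_nonneg_of_nonpos (inv_nonneg.mpr hφT.le) hlogp
  · have hrlt : b / x < 1 := (div_lt_one hx0).mpr hlt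
    have hC : 0 < (1 - b / x)⁻¹ := by rw [inv_pos]; linarith
    apply tendsto_of_tendsto_of_tendsto_of_le_of_le' hglow
      (hgup (Real.log ((1 - b / x)⁻¹)))
    · filter_upwards [hφ1, hlb] with T h1 hlbT
      have hφT : (0:ℝ) < φ T := lt_of_lt_of_le one_pos h1
      have hM : (0:ℝ) < b * φ T := by positivity
      refine ((hkey T h1).1).trans ?_
      exact mul_le_mul_of_nonneg_left
        (Real.log_le_log (pterm_pos hM _) hlbT) (inv_nonneg.mpr hφT.le)
    · filter_upwards [hφ1, hlb, hub2 hlt] with T h1 hlbT hub2T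
      have hφT : (0:ℝ) < φ T := lt_of_lt_of_le one_pos h1
      have hM : (0:ℝ) < b * φ T := by positivity
      have hpt : 0 < pterm (b * φ T) ⌈x * φ T⌉₊ := pterm_pos hM _
      have hppos : 0 < p T := lt_of_lt_of_le hpt hlbT
      have l1 : Real.log (p T) ≤ Real.log (pterm (b * φ T) ⌈x * φ T⌉₊ * (1 - b / x)⁻¹) :=
        Real.log_le_log hppos hub2T
      rw [Real.log_mul hpt.ne' hC.ne'] at l1
      calc (φ T)⁻¹ * Real.log (p T)
          ≤ (φ T)⁻¹ * (Real.log (pterm (b * φ T) ⌈x * φ T⌉₊)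
            + Real.log ((1 - b / x)⁻¹)) :=
            mul_le_mul_of_nonneg_left l1 (inv_nonneg.mpr hφT.le)
        _ = (φ T)⁻¹ * Real.log (pterm (b * φ T) ⌈x * φ T⌉₊)
            + (φ T)⁻¹ * Real.log ((1 - b / x)⁻¹) := by ring
        _ ≤ ((-b - ((⌈x * φ T⌉₊ : ℝ) / φ T) *
            Real.log (((⌈x * φ T⌉₊ : ℝ) / φ T) / b) + ((⌈x * φ T⌉₊ : ℝ) / φ T)) - (φ T)⁻¹)
            + (φ T)⁻¹ * Real.log ((1 - b / x)⁻¹) := by linarith [(hkey T h1).2]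


/-- **Upper-tail logarithmic asymptotics for Poisson variables.** Let `b > 0` and
`φ(T) → ∞`, and for each `T > 0` let `N_T` be Poisson with mean `b·φ(T)`. Then for every
`x ≥ b`, `(1/φ(T)) ln P(N_T ≥ x·φ(T)) → -(x ln(x/b) - x + b)` as `T → ∞`. -/
theorem poisson_upper_tail_asymptotics
    {Ω : Type*} [MeasurableSpace Ω] (P : Measure Ω) [IsProbabilityMeasure P]
    (b : ℝ) (hb : 0 < b)
    (φ : ℝ → ℝ) (hφpos : ∀ T > (0 : ℝ), 0 < φ T)
    (hφ : Tendsto φ atTop atTop)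
    (N : ℝ → Ω → ℕ)
    (hpois : ∀ T > (0 : ℝ), ∀ n : ℕ,
      P {ω | N T ω = n} =
        ENNReal.ofReal (Real.exp (-(b * φ T)) * (b * φ T) ^ n / (Nat.factorial n)))
    (x : ℝ) (hx : b ≤ x) :
    Tendsto
      (fun T => (((φ T)⁻¹ : ℝ) : EReal) *
        ENNReal.log (P {ω | x * φ T ≤ (N T ω : ℝ)}))
      atTop (𝓝 ((-(x * Real.log (x / b) - x + b) : ℝ) : EReal)) := by
  have hx0 : 0 < x := hb.trans_le hx
  have hφ1 : ∀ᶠ T in atTop, 1 ≤ φ T := hφ.eventually_ge_atTop 1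
  have hev : ∀ᶠ T in atTop, (0:ℝ) < T := eventually_gt_atTop 0
  -- pointwise lower bound on the tail probability
  have hlbE : ∀ T, 0 < T → 1 ≤ φ T →
      ENNReal.ofReal (pterm (b * φ T) ⌈x * φ T⌉₊) ≤ P {ω | x * φ T ≤ (N T ω : ℝ)} := by
    intro T hT h1
    have hsub : {ω | N T ω = ⌈x * φ T⌉₊} ⊆ {ω | x * φ T ≤ (N T ω : ℝ)} := by
      intro ω hω
      simp only [Set.mem_setOf_eq] at *
      rw [hω]
      exact Nat.le_ceil _
    calc ENNReal.ofReal (pterm (b * φ T) ⌈x * φ T⌉₊)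
        = P {ω | N T ω = ⌈x * φ T⌉₊} := (hpois T hT ⌈x * φ T⌉₊).symm
      _ ≤ P {ω | x * φ T ≤ (N T ω : ℝ)} := measure_mono hsub
  -- pointwise upper bound (geometric series), when b < x
  have hubE : b < x → ∀ T, 0 < T → 1 ≤ φ T →
      P {ω | x * φ T ≤ (N T ω : ℝ)} ≤
        ENNReal.ofReal (pterm (b * φ T) ⌈x * φ T⌉₊ * (1 - b / x)⁻¹) := by
    intro hlt T hT h1
    have hφT : (0:ℝ) < φ T := lt_of_lt_of_le one_pos h1
    have hM : (0:ℝ) < b * φ T := by positivity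
    have hr0 : (0:ℝ) < b / x := by positivity
    have hr1 : b / x < 1 := (div_lt_one hx0).mpr hlt
    have hmr : b * φ T ≤ (b / x) * (⌈x * φ T⌉₊ : ℝ) := by
      have h2 : (b / x) * (x * φ T) ≤ (b / x) * (⌈x * φ T⌉₊ : ℝ) :=
        mul_le_mul_of_nonneg_left (Nat.le_ceil _) hr0.le
      have h3 : (b / x) * (x * φ T) = b * φ T := by field_simp
      linarith
    have hsub : {ω | x * φ T ≤ (N T ω : ℝ)} ⊆
        ⋃ n : ℕ, {ω | N T ω = ⌈x * φ T⌉₊ + n} := by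
      intro ω hω
      simp only [Set.mem_setOf_eq, Set.mem_iUnion] at *
      have hn : ⌈x * φ T⌉₊ ≤ N T ω := Nat.ceil_le.mpr hω
      exact ⟨N T ω - ⌈x * φ T⌉₊, by omega⟩
    calc P {ω | x * φ T ≤ (N T ω : ℝ)}
        ≤ P (⋃ n : ℕ, {ω | N T ω = ⌈x * φ T⌉₊ + n}) := measure_mono hsub
      _ ≤ ∑' n : ℕ, P {ω | N T ω = ⌈x * φ T⌉₊ + n} := measure_iUnion_le _
      _ = ∑' n : ℕ, ENNReal.ofReal (pterm (b * φ T) (⌈x * φ T⌉₊ + n)) :=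
          tsum_congr fun n => hpois T hT _
      _ ≤ ∑' n : ℕ, ENNReal.ofReal (pterm (b * φ T) ⌈x * φ T⌉₊ * (b / x) ^ n) :=
          ENNReal.tsum_le_tsum fun n =>
            ENNReal.ofReal_le_ofReal (pterm_tail_le hM _ hr0 hmr n)
      _ = ENNReal.ofReal (∑' n : ℕ, pterm (b * φ T) ⌈x * φ T⌉₊ * (b / x) ^ n) :=
          (ENNReal.ofReal_tsum_of_nonneg
            (fun n => mul_nonneg (pterm_pos hM _).le (by positivity))
            ((summable_geometric_of_lt_one hr0.le hr1).mul_left _)).symm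
      _ = ENNReal.ofReal (pterm (b * φ T) ⌈x * φ T⌉₊ * (1 - b / x)⁻¹) := by
          rw [tsum_mul_left, tsum_geometric_of_lt_one hr0.le hr1]
  -- real-valued limit
  have hrl := real_limit b x hb hx φ hφ
    (fun T => (P {ω | x * φ T ≤ (N T ω : ℝ)}).toReal)
    (by
      filter_upwards [hev, hφ1] with T hT h1
      exact (ENNReal.ofReal_le_iff_le_toReal (measure_ne_top P _)).mp (hlbE T hT h1))
    (by
      filter_upwards with T
      exact ENNReal.toReal_le_of_le_ofReal zero_le_one
        (by simpa [ENNReal.ofReal_one] using prob_le_one (μ := P)))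
    (by
      intro hlt
      filter_upwards [hev, hφ1] with T hT h1
      have hφT : (0:ℝ) < φ T := lt_of_lt_of_le one_pos h1
      have hM : (0:ℝ) < b * φ T := by positivity
      have hr1 : b / x < 1 := (div_lt_one hx0).mpr hlt
      have hC : (0:ℝ) ≤ (1 - b / x)⁻¹ := by
        rw [inv_nonneg]; linarith
      exact ENNReal.toReal_le_of_le_ofReal
        (mul_nonneg (pterm_pos hM _).le hC) (hubE hlt T hT h1))
  refine (EReal.tendsto_coe.mpr hrl).congr' ?_
  filter_upwards [hev, hφ1] with T hT h1
  have hφT : (0:ℝ) < φ T := lt_of_lt_of_le one_pos h1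
  have hM : (0:ℝ) < b * φ T := by positivity
  have hpos : 0 < P {ω | x * φ T ≤ (N T ω : ℝ)} :=
    lt_of_lt_of_le (ENNReal.ofReal_pos.mpr (pterm_pos hM _)) (hlbE T hT h1)
  have htr : 0 < (P {ω | x * φ T ≤ (N T ω : ℝ)}).toReal :=
    ENNReal.toReal_pos hpos.ne' (measure_ne_top P _)
  rw [ENNReal.log_pos_real' htr]
  exact EReal.coe_mul _ _
end
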